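/- arXiv:1603.05948 — 7 statements merged into one kernel-verified Lean document; each statement's English description precedes it below -/
import Mathlib

section
/- For every positive integer n, the multiple zeta value ζ({2}^n) = ∑_{k_1 > k_2 > ⋯ > k_n ≥ 1} 1/(k_1² k_2² ⋯ k_n²) equals π^{2n}/(2n+1)!. -/
/-!
Put `m = 2N + 1`. De Moivre gives `sin (m θ) = sin θ ^ m * P_N (cot θ ^ 2)` with
`P_N = ∑ (-1)^(N-i) C(m, 2i) X^i`, so the `N` distinct numbers `cot² (kπ/m)`, `1 ≤ k ≤ N`, are
all the roots of `P_N`, and Vieta gives their `j`-th elementary symmetric function as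
`C(m, 2j+1) / m`. Applying `cot² θ < θ⁻² < 1 + cot² θ` on `(0, π/2)` at `θ = kπ/m`, the truncated
sum `e_n(1/1², …, 1/N²)` lies between `(π/m)^(2n) e_n(cot²)` and `(π/m)^(2n) e_n(1 + cot²)`;
expanding the upper bound in the `e_j(cot²)` shows that both bounds tend to `π^(2n) / (2n+1)!`.
-/

open Finset Polynomial Real Filter Topology

namespace Finset

theorem sum_range_two_mul {M : Type*} [AddCommMonoid M] (f : ℕ → M) (n : ℕ) :
    ∑ i ∈ range (2 * n), f i = ∑ j ∈ range n, (f (2 * j) + f (2 * j + 1)) := by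
  induction n with
  | zero => simp
  | succ n ih => rw [Nat.mul_succ, sum_range_succ, sum_range_succ, sum_range_succ, ih, add_assoc]

theorem sum_powersetCard_prod_mul_left {ι R : Type*} [CommSemiring R] (u : Finset ι) (c : R)
    (a : ι → R) (n : ℕ) :
    ∑ s ∈ powersetCard n u, ∏ i ∈ s, c * a i = c ^ n * ∑ s ∈ powersetCard n u, ∏ i ∈ s, a i := by
  rw [mul_sum]
  refine sum_congr rfl fun s hs => ?_
  rw [prod_mul_distrib, prod_const, (mem_powersetCard.1 hs).2]

def strictAntiEquiv (α : Type*) [LinearOrder α] (p : α → Prop) (n : ℕ) :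
    {f : Fin n → α // StrictAnti f ∧ ∀ i, p (f i)} ≃ {s : Finset α // #s = n ∧ ∀ x ∈ s, p x} where
  toFun f := ⟨univ.image f.1, by rw [card_image_of_injective _ f.2.1.injective, card_fin],
    by simpa using f.2.2⟩
  invFun s := ⟨fun i => s.1.orderEmbOfFin s.2.1 i.rev,
    fun _ _ hij => (s.1.orderEmbOfFin s.2.1).strictMono (Fin.rev_lt_rev.2 hij),
    fun i => s.2.2 _ (orderEmbOfFin_mem _ _ _)⟩
  left_inv f := by
    have h := orderEmbOfFin_unique (s := univ.image f.1) (f := fun i => f.1 i.rev)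
      (by rw [card_image_of_injective _ f.2.1.injective, card_fin])
      (fun i => mem_image_of_mem _ (mem_univ _)) fun _ _ hij => f.2.1 (Fin.rev_lt_rev.2 hij)
    ext i
    simpa using (congrFun h i.rev).symm
  right_inv s := Subtype.ext <| coe_injective <| by
    rw [coe_image, coe_univ, Set.image_univ]
    exact (Fin.rev_surjective.range_comp _).trans (range_orderEmbOfFin _ _)

variable {ι : Type*} [DecidableEq ι]

theorem card_filter_superset_powersetCard_le (u w : Finset ι) (n : ℕ) :
    #{s ∈ powersetCard n u | w ⊆ s} ≤ #u ^ (n - #w) := by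
  refine (card_le_card_of_injOn (· \ w) (t := powersetCard (n - #w) u) ?_ ?_).trans ?_
  · intro s hs
    obtain ⟨hs, hws⟩ := mem_filter.1 hs
    obtain ⟨hsu, rfl⟩ := mem_powersetCard.1 hs
    exact mem_powersetCard.2 ⟨sdiff_subset.trans hsu, card_sdiff_of_subset hws⟩
  · intro s hs s' hs' h
    rw [← union_sdiff_of_subset (mem_filter.1 hs).2, ← union_sdiff_of_subset (mem_filter.1 hs').2]
    exact congrArg (w ∪ ·) h
  · rw [card_powersetCard]; exact Nat.choose_le_pow _ _

variable {R : Type*} [CommSemiring R] [PartialOrder R] [IsOrderedRing R]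

theorem sum_powersetCard_sum_powersetCard_le (u : Finset ι) {g : Finset ι → R}
    (hg : ∀ w ⊆ u, 0 ≤ g w) (n j : ℕ) :
    ∑ s ∈ powersetCard n u, ∑ w ∈ powersetCard j s, g w ≤
      (#u : R) ^ (n - j) * ∑ w ∈ powersetCard j u, g w := by
  rw [sum_comm' (t' := powersetCard j u) (s' := fun w => {s ∈ powersetCard n u | w ⊆ s})]
  · rw [mul_sum]
    refine sum_le_sum fun w hw => ?_
    obtain ⟨hwu, rfl⟩ := mem_powersetCard.1 hw
    rw [sum_const, nsmul_eq_mul]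
    have hcard := Nat.mono_cast (α := R) (card_filter_superset_powersetCard_le u w n)
    rw [Nat.cast_pow] at hcard
    exact mul_le_mul_of_nonneg_right hcard (hg w hwu)
  · intro s w
    simp only [mem_powersetCard, mem_filter]
    constructor
    · rintro ⟨⟨hsu, hs⟩, hws, hw⟩; exact ⟨⟨⟨hsu, hs⟩, hws⟩, hws.trans hsu, hw⟩
    · rintro ⟨⟨⟨hsu, hs⟩, hws⟩, -, hw⟩; exact ⟨⟨hsu, hs⟩, hws, hw⟩

theorem sum_powersetCard_prod_one_add_le (u : Finset ι) {t : ι → R} (ht : ∀ i ∈ u, 0 ≤ t i)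
    (n : ℕ) :
    ∑ s ∈ powersetCard n u, ∏ i ∈ s, (1 + t i) ≤
      ∑ j ∈ range (n + 1), (#u : R) ^ (n - j) * ∑ w ∈ powersetCard j u, ∏ i ∈ w, t i := by
  have hexpand : ∀ s ∈ powersetCard n u,
      ∏ i ∈ s, (1 + t i) = ∑ j ∈ range (n + 1), ∑ w ∈ powersetCard j s, ∏ i ∈ w, t i := by
    intro s hs
    rw [prod_one_add, sum_powerset, (mem_powersetCard.1 hs).2]
  rw [sum_congr rfl hexpand, sum_comm]
  exact sum_le_sum fun j _ => sum_powersetCard_sum_powersetCard_le u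
    (fun w hw => prod_nonneg fun i hi => ht i (hw hi)) n j

end Finset

namespace Real

theorem cot_eq_inv_tan (x : ℝ) : cot x = (tan x)⁻¹ := by
  rw [cot_eq_cos_div_sin, tan_eq_sin_div_cos, inv_div]

theorem cot_sq_lt_inv_sq {θ : ℝ} (h0 : 0 < θ) (h1 : θ < π / 2) : cot θ ^ 2 < (θ ^ 2)⁻¹ := by
  have htan : θ < tan θ := lt_tan h0 h1
  rw [← inv_pow, cot_eq_inv_tan]
  exact pow_lt_pow_left₀ (inv_strictAnti₀ h0 htan) (inv_pos.2 (h0.trans htan)).le two_ne_zero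

theorem inv_sq_lt_one_add_cot_sq {θ : ℝ} (hs : sin θ ≠ 0) : (θ ^ 2)⁻¹ < 1 + cot θ ^ 2 := by
  have hθ : θ ≠ 0 := by rintro rfl; simp at hs
  have h1 : 1 + cot θ ^ 2 = (sin θ ^ 2)⁻¹ := by
    rw [cot_eq_cos_div_sin, div_pow, one_add_div (pow_ne_zero 2 hs), sin_sq_add_cos_sq, one_div]
  rw [h1]
  exact inv_strictAnti₀ (by positivity) (sin_sq_lt_sq hθ)

end Real

namespace Complex

theorem im_ofReal_add_I_pow_odd (x : ℝ) (N : ℕ) :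
    (((x : ℂ) + I) ^ (2 * N + 1)).im =
      ∑ i ∈ range (N + 1), (-1) ^ (N - i) * ((2 * N + 1).choose (2 * i) : ℝ) * x ^ (2 * i) := by
  rw [add_pow, im_sum, show 2 * N + 1 + 1 = 2 * (N + 1) by ring, sum_range_two_mul]
  refine sum_congr rfl fun i hi => ?_
  have hi : i ≤ N := Nat.lt_succ_iff.1 (mem_range.1 hi)
  have hodd : I ^ (2 * N + 1 - (2 * i + 1)) = ((-1 : ℝ) ^ (N - i) : ℝ) := by
    rw [show 2 * N + 1 - (2 * i + 1) = 2 * (N - i) by omega, pow_mul, I_sq]; push_cast; ring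
  have heven : I ^ (2 * N + 1 - 2 * i) = ((-1 : ℝ) ^ (N - i) : ℝ) * I := by
    rw [show 2 * N + 1 - 2 * i = 2 * (N - i) + 1 by omega, pow_succ, pow_mul, I_sq]; push_cast; ring
  rw [heven, hodd]
  simp only [← ofReal_pow, ← ofReal_natCast, ← ofReal_mul, mul_im, ofReal_re, ofReal_im, I_re,
    I_im]
  ring

end Complex

theorem hasSum_of_monotone_of_tendsto {β : Type*} {f : β → ℝ} (hf : 0 ≤ f) {K : ℕ → Finset β}
    (hK : Monotone K) (hcover : ∀ b, ∃ N, b ∈ K N) {a : ℝ}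
    (h : Tendsto (fun N => ∑ b ∈ K N, f b) atTop (𝓝 a)) : HasSum f a := by
  have hKtop := tendsto_atTop_finset_of_monotone hK hcover
  have hmono : Monotone fun N => ∑ b ∈ K N, f b :=
    fun _ _ hNM => sum_le_sum_of_subset_of_nonneg (hK hNM) fun b _ _ => hf b
  have hsum : Summable f := summable_of_sum_le hf fun u => by
    obtain ⟨N, hN⟩ := (hKtop.eventually (eventually_ge_atTop u)).exists
    exact (sum_le_sum_of_subset_of_nonneg hN fun b _ _ => hf b).trans (hmono.ge_of_tendsto h N)
  exact tendsto_nhds_unique (hsum.hasSum.comp hKtop) h ▸ hsum.hasSum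

namespace ZetaTwo

noncomputable def sinPoly (N : ℕ) : ℝ[X] :=
  ∑ i ∈ range (N + 1), C ((-1) ^ (N - i) * ((2 * N + 1).choose (2 * i) : ℝ)) * X ^ i

theorem coeff_sinPoly {N i : ℕ} (hi : i ≤ N) :
    (sinPoly N).coeff i = (-1) ^ (N - i) * ((2 * N + 1).choose (2 * i) : ℝ) := by
  rw [sinPoly, finsetSum_coeff, sum_eq_single i]
  · rw [coeff_C_mul_X_pow, if_pos rfl]
  · intro j _ hji; rw [coeff_C_mul_X_pow, if_neg hji.symm]
  · intro h; exact absurd (mem_range.2 (Nat.lt_succ_of_le hi)) h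

theorem coeff_sinPoly_self (N : ℕ) : (sinPoly N).coeff N = 2 * N + 1 := by
  rw [coeff_sinPoly le_rfl, Nat.sub_self, pow_zero, one_mul, Nat.choose_succ_self_right]
  push_cast; ring

theorem natDegree_sinPoly (N : ℕ) : (sinPoly N).natDegree = N := by
  refine natDegree_eq_of_le_of_coeff_ne_zero ?_ ?_
  · exact natDegree_sum_le_of_forall_le _ _ fun i hi =>
      (natDegree_C_mul_X_pow_le _ _).trans (Nat.lt_succ_iff.1 (mem_range.1 hi))
  · rw [coeff_sinPoly_self]; positivity

theorem leadingCoeff_sinPoly (N : ℕ) : (sinPoly N).leadingCoeff = 2 * N + 1 := by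
  rw [leadingCoeff, natDegree_sinPoly, coeff_sinPoly_self]

theorem eval_sinPoly (N : ℕ) (x : ℝ) :
    (sinPoly N).eval (x ^ 2) = (((x : ℂ) + Complex.I) ^ (2 * N + 1)).im := by
  simp [sinPoly, eval_finsetSum, Complex.im_ofReal_add_I_pow_odd, pow_mul]

theorem sin_odd_mul {N : ℕ} {θ : ℝ} (hs : sin θ ≠ 0) :
    sin ((2 * N + 1) * θ) = sin θ ^ (2 * N + 1) * (sinPoly N).eval (cot θ ^ 2) := by
  have hcs : (cos θ : ℂ) + sin θ * Complex.I = (sin θ : ℂ) * ((cot θ : ℂ) + Complex.I) := by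
    rw [cot_eq_cos_div_sin, Complex.ofReal_div, mul_add, mul_div_cancel₀ _ (mod_cast hs)]
  have hpow := Complex.cos_add_sin_mul_I_pow (2 * N + 1) θ
  rw [← Complex.ofReal_cos, ← Complex.ofReal_sin, hcs, mul_pow, ← Complex.ofReal_pow,
    show ((2 * N + 1 : ℕ) : ℂ) * θ = ((2 * N + 1 : ℝ) * θ : ℝ) by push_cast; ring,
    ← Complex.ofReal_cos, ← Complex.ofReal_sin] at hpow
  have him := congrArg Complex.im hpow
  rw [Complex.im_ofReal_mul, Complex.add_im, Complex.ofReal_im, Complex.im_ofReal_mul,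
    Complex.I_im, zero_add, mul_one] at him
  rw [eval_sinPoly, him]

noncomputable def cotSq (N k : ℕ) : ℝ := cot (k * π / (2 * N + 1)) ^ 2

theorem angle_mem_Ioo {N k : ℕ} (hk : k ∈ Icc 1 N) :
    (k : ℝ) * π / (2 * N + 1) ∈ Set.Ioo 0 (π / 2) := by
  obtain ⟨hk1, hkN⟩ := mem_Icc.1 hk
  have hk1' : (1 : ℝ) ≤ k := by exact_mod_cast hk1
  have hkN' : (k : ℝ) ≤ N := by exact_mod_cast hkN
  constructor
  · positivity
  · rw [div_lt_div_iff₀ (by positivity) two_pos]; nlinarith [pi_pos]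

theorem sin_angle_ne_zero {N k : ℕ} (hk : k ∈ Icc 1 N) : sin (k * π / (2 * N + 1)) ≠ 0 :=
  have h := angle_mem_Ioo hk
  (sin_pos_of_pos_of_lt_pi h.1 (h.2.trans (by linarith [pi_pos]))).ne'

theorem cot_angle_pos {N k : ℕ} (hk : k ∈ Icc 1 N) : 0 < cot (k * π / (2 * N + 1)) := by
  obtain ⟨h0, h1⟩ := angle_mem_Ioo hk
  rw [cot_eq_inv_tan]
  exact inv_pos.2 (tan_pos_of_pos_of_lt_pi_div_two h0 h1)

theorem isRoot_sinPoly_cotSq {N k : ℕ} (hk : k ∈ Icc 1 N) : (sinPoly N).IsRoot (cotSq N k) := by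
  have hs := sin_angle_ne_zero hk
  have h := sin_odd_mul (N := N) hs
  rw [show (2 * N + 1 : ℝ) * (k * π / (2 * N + 1)) = (k : ℕ) * π by field_simp,
    sin_nat_mul_pi] at h
  exact (mul_eq_zero.1 h.symm).resolve_left (pow_ne_zero _ hs)

theorem injOn_cotSq (N : ℕ) : Set.InjOn (cotSq N) (Icc 1 N) := by
  intro k hk l hl hkl
  have hcot := (sq_eq_sq₀ (cot_angle_pos hk).le (cot_angle_pos hl).le).1 hkl
  rw [cot_eq_inv_tan, cot_eq_inv_tan, inv_inj] at hcot
  have hIoo : ∀ {k}, k ∈ Icc 1 N → (k : ℝ) * π / (2 * N + 1) ∈ Set.Ioo (-(π / 2)) (π / 2) :=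
    fun hk => ⟨by linarith [(angle_mem_Ioo hk).1, pi_pos], (angle_mem_Ioo hk).2⟩
  have hangle := injOn_tan (hIoo hk) (hIoo hl) hcot
  rw [div_left_inj' (by positivity), mul_left_inj' pi_ne_zero] at hangle
  exact_mod_cast hangle

theorem roots_sinPoly (N : ℕ) : (sinPoly N).roots = (Icc 1 N).val.map (cotSq N) := by
  have hne : sinPoly N ≠ 0 := leadingCoeff_ne_zero.1 (by rw [leadingCoeff_sinPoly]; positivity)
  have hnodup : ((Icc 1 N).val.map (cotSq N)).Nodup :=
    Multiset.Nodup.map_on (fun k hk l hl => injOn_cotSq N hk hl) (Icc 1 N).nodup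
  refine (Multiset.eq_of_le_of_card_le ((Multiset.le_iff_subset hnodup).2 fun x hx => ?_) ?_).symm
  · obtain ⟨k, hk, rfl⟩ := Multiset.mem_map.1 hx
    exact (mem_roots hne).2 (isRoot_sinPoly_cotSq hk)
  · simpa [natDegree_sinPoly] using card_roots' (sinPoly N)

theorem esymm_cotSq {N j : ℕ} (hj : j ≤ N) :
    ∑ s ∈ powersetCard j (Icc 1 N), ∏ k ∈ s, cotSq N k =
      ((2 * N + 1).choose (2 * j + 1) : ℝ) / (2 * N + 1) := by
  have hcard : Multiset.card (sinPoly N).roots = (sinPoly N).natDegree := by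
    simp [roots_sinPoly, natDegree_sinPoly]
  have h := coeff_eq_esymm_roots_of_card hcard (k := N - j) (by rw [natDegree_sinPoly]; omega)
  rw [coeff_sinPoly (Nat.sub_le N j), leadingCoeff_sinPoly, natDegree_sinPoly,
    roots_sinPoly, Finset.esymm_map_val, Nat.sub_sub_self hj,
    show 2 * (N - j) = 2 * N + 1 - (2 * j + 1) by omega, Nat.choose_symm (by omega)] at h
  rw [eq_div_iff (by positivity)]
  exact (mul_left_cancel₀ (pow_ne_zero j (by norm_num)) (h.trans (by ring))).symm

noncomputable def truncZetaTwos (n N : ℕ) : ℝ :=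
  ∑ s ∈ powersetCard n (Icc 1 N), ∏ k ∈ s, ((k : ℝ) ^ 2)⁻¹

theorem inv_sq_eq_mul_inv_sq_angle {N k : ℕ} (hk : k ∈ Icc 1 N) :
    ((k : ℝ) ^ 2)⁻¹ = (π / (2 * N + 1)) ^ 2 * (((k * π / (2 * N + 1)) ^ 2)⁻¹) := by
  have : (k : ℝ) ≠ 0 := by exact_mod_cast (Nat.one_le_iff_ne_zero.1 (mem_Icc.1 hk).1)
  field_simp

theorem mul_cotSq_le_inv_sq {N k : ℕ} (hk : k ∈ Icc 1 N) :
    (π / (2 * N + 1)) ^ 2 * cotSq N k ≤ ((k : ℝ) ^ 2)⁻¹ := by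
  rw [inv_sq_eq_mul_inv_sq_angle hk]
  exact mul_le_mul_of_nonneg_left
    (cot_sq_lt_inv_sq (angle_mem_Ioo hk).1 (angle_mem_Ioo hk).2).le (by positivity)

theorem inv_sq_le_mul_one_add_cotSq {N k : ℕ} (hk : k ∈ Icc 1 N) :
    ((k : ℝ) ^ 2)⁻¹ ≤ (π / (2 * N + 1)) ^ 2 * (1 + cotSq N k) := by
  rw [inv_sq_eq_mul_inv_sq_angle hk]
  exact mul_le_mul_of_nonneg_left
    (inv_sq_lt_one_add_cot_sq (sin_angle_ne_zero hk)).le (by positivity)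

theorem choose_mul_pow_le_truncZetaTwos {n N : ℕ} (hn : n ≤ N) :
    ((2 * N + 1).choose (2 * n + 1) : ℝ) * (π / (2 * N + 1)) ^ (2 * n + 1) / π ≤
      truncZetaTwos n N := by
  have hlow : ∑ s ∈ powersetCard n (Icc 1 N), ∏ k ∈ s, (π / (2 * N + 1)) ^ 2 * cotSq N k ≤
      truncZetaTwos n N :=
    sum_le_sum fun s hs => prod_le_prod (fun k _ => by unfold cotSq; positivity)
      fun k hk => mul_cotSq_le_inv_sq ((mem_powersetCard.1 hs).1 hk)
  rw [sum_powersetCard_prod_mul_left, esymm_cotSq hn, ← pow_mul] at hlow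
  convert hlow using 1
  rw [pow_succ]
  field_simp

theorem truncZetaTwos_le_sum {n N : ℕ} (hn : n ≤ N) :
    truncZetaTwos n N ≤ ∑ j ∈ range (n + 1),
      ((2 * N + 1).choose (2 * j + 1) : ℝ) * (π / (2 * N + 1)) ^ (2 * j + 1) *
        (N * (π / (2 * N + 1)) ^ 2) ^ (n - j) / π := by
  have hup : truncZetaTwos n N ≤
      ∑ s ∈ powersetCard n (Icc 1 N), ∏ k ∈ s, (π / (2 * N + 1)) ^ 2 * (1 + cotSq N k) :=
    sum_le_sum fun s hs => prod_le_prod (fun k _ => by positivity)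
      fun k hk => inv_sq_le_mul_one_add_cotSq ((mem_powersetCard.1 hs).1 hk)
  rw [sum_powersetCard_prod_mul_left, ← pow_mul] at hup
  refine hup.trans ((mul_le_mul_of_nonneg_left (sum_powersetCard_prod_one_add_le (t := cotSq N) _
    (fun k _ => sq_nonneg _) n) (by positivity)).trans_eq ?_)
  rw [mul_sum]
  refine sum_congr rfl fun j hj => ?_
  obtain ⟨d, rfl⟩ := Nat.exists_eq_add_of_le (Nat.lt_succ_iff.1 (mem_range.1 hj))
  rw [esymm_cotSq (by omega), Nat.card_Icc, Nat.add_sub_cancel, Nat.add_sub_cancel_left, mul_add,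
    pow_add, pow_succ, mul_pow, ← pow_mul]
  field_simp

theorem tendsto_choose_mul_pi_div_pow (k : ℕ) :
    Tendsto (fun N : ℕ => ((2 * N + 1).choose k : ℝ) * (π / (2 * N + 1)) ^ k) atTop
      (𝓝 (π ^ k / k.factorial)) := by
  have hr : Tendsto (fun m : ℕ => (m : ℝ) * (π / m)) atTop (𝓝 π) :=
    tendsto_const_nhds.congr' <| (eventually_ne_atTop 0).mono fun m hm =>
      (mul_div_cancel₀ π (Nat.cast_ne_zero.2 hm)).symm
  have hodd : Tendsto (fun N : ℕ => 2 * N + 1) atTop atTop :=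
    tendsto_atTop_atTop.2 fun b => ⟨b, fun N hN => by omega⟩
  have h := (ProbabilityTheory.tendsto_choose_mul_pow_atTop k hr).comp hodd
  simp only [Function.comp_def, Nat.cast_add, Nat.cast_mul, Nat.cast_ofNat, Nat.cast_one] at h
  exact h

theorem tendsto_natCast_mul_pi_div_sq :
    Tendsto (fun N : ℕ => (N : ℝ) * (π / (2 * N + 1)) ^ 2) atTop (𝓝 0) := by
  have h := (tendsto_one_div_add_atTop_nhds_zero_nat (𝕜 := ℝ)).const_mul (π ^ 2)
  rw [mul_zero] at h
  refine squeeze_zero (fun N => by positivity) (fun N => ?_) h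
  rw [div_pow, mul_div_assoc', mul_one_div, div_le_div_iff₀ (by positivity) (by positivity)]
  have := sq_nonneg π
  nlinarith

theorem tendsto_truncZetaTwos (n : ℕ) :
    Tendsto (truncZetaTwos n) atTop (𝓝 (π ^ (2 * n) / (2 * n + 1).factorial)) := by
  have hL : π ^ (2 * n) / ((2 * n + 1).factorial : ℝ) =
      π ^ (2 * n + 1) / (2 * n + 1).factorial / π := by
    rw [pow_succ]; field_simp
  have hupper := tendsto_finsetSum (range (n + 1)) fun j _ =>
    (((tendsto_choose_mul_pi_div_pow (2 * j + 1)).mul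
      (tendsto_natCast_mul_pi_div_sq.pow (n - j))).div_const π)
  rw [sum_range_succ, sum_eq_zero fun j hj => by
    rw [zero_pow (by have := mem_range.1 hj; omega), mul_zero, zero_div], Nat.sub_self, pow_zero,
    mul_one, zero_add] at hupper
  rw [hL]
  exact tendsto_of_tendsto_of_tendsto_of_le_of_le'
    ((tendsto_choose_mul_pi_div_pow (2 * n + 1)).div_const π) hupper
    ((eventually_ge_atTop n).mono fun N hN => choose_mul_pow_le_truncZetaTwos hN)
    ((eventually_ge_atTop n).mono fun N hN => truncZetaTwos_le_sum hN)

theorem sum_powerset_range_indicator (n N : ℕ) :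
    ∑ s ∈ (range (N + 1)).powerset, {s : Finset ℕ | #s = n ∧ ∀ x ∈ s, 1 ≤ x}.indicator
      (fun s => ∏ x ∈ s, ((x : ℝ) ^ 2)⁻¹) s = truncZetaTwos n N := by
  rw [sum_indicator_eq_sum_filter, truncZetaTwos]
  congr 1
  ext s
  simp only [mem_filter, mem_powerset, mem_powersetCard, Set.mem_ofPred_eq, subset_iff, mem_range,
    mem_Icc]
  grind

theorem hasSum_prod_inv_sq (n : ℕ) :
    HasSum (fun s : {s : Finset ℕ // #s = n ∧ ∀ x ∈ s, 1 ≤ x} => ∏ x ∈ s.1, ((x : ℝ) ^ 2)⁻¹)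
      (π ^ (2 * n) / (2 * n + 1).factorial) := by
  have h : HasSum ({s : Finset ℕ | #s = n ∧ ∀ x ∈ s, 1 ≤ x}.indicator
      fun s => ∏ x ∈ s, ((x : ℝ) ^ 2)⁻¹) (π ^ (2 * n) / (2 * n + 1).factorial) := by
    refine hasSum_of_monotone_of_tendsto (K := fun N => (range (N + 1)).powerset)
      (Set.indicator_nonneg fun s _ => prod_nonneg fun x _ => by positivity)
      (fun N M h => powerset_mono.2 (range_mono (by omega))) (fun s => ⟨s.sup id, ?_⟩) ?_
    · exact mem_powerset.2 fun x hx => mem_range.2 (Nat.lt_succ_of_le (le_sup (f := id) hx))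
    · simpa only [sum_powerset_range_indicator] using tendsto_truncZetaTwos n
  exact hasSum_subtype_iff_indicator.2 h

end ZetaTwo

open ZetaTwo

theorem zeta_two_pow_n_general (n : ℕ) :
    ∑' k : {f : Fin n → ℕ // (∀ i j : Fin n, i < j → f j < f i) ∧ ∀ i, 1 ≤ f i},
      ∏ i, ((k.1 i : ℝ) ^ 2)⁻¹ =
    Real.pi ^ (2 * n) / (Nat.factorial (2 * n + 1)) := by
  have h := (strictAntiEquiv ℕ (1 ≤ ·) n).hasSum_iff.2 (hasSum_prod_inv_sq n)
  refine Eq.trans (tsum_congr fun k => ?_) h.tsum_eq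
  exact (prod_image (f := fun x : ℕ => ((x : ℝ) ^ 2)⁻¹) fun i _ j _ hij =>
    (show StrictAnti k.1 from k.2.1).injective hij).symm

/-- For every positive integer `n`,
`ζ({2}^n) = ∑_{k₁ > k₂ > ⋯ > k_n ≥ 1} 1/(k₁² ⋯ k_n²) = π^(2n)/(2n+1)!`. -/
theorem zeta_two_pow_n (n : ℕ) (hn : 1 ≤ n) :
    ∑' k : {f : Fin n → ℕ // (∀ i j : Fin n, i < j → f j < f i) ∧ ∀ i, 1 ≤ f i},
      ∏ i, ((k.1 i : ℝ) ^ 2)⁻¹ =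
    Real.pi ^ (2 * n) / (Nat.factorial (2 * n + 1)) :=
  zeta_two_pow_n_general n
end

section
/- The multiple zeta value ζ(3,1) = ∑_{k_1 > k_2 ≥ 1} 1/(k_1³ k_2) equals π⁴/360, i.e., ζ(4) = 4·ζ(3,1). -/
/-!
Expand `∑_{m,n ≥ 1} 1/(m²n²)` (which converges) in two ways. Splitting the index set into
`m > n`, `m < n` and `m = n` gives `2 ζ(2,2) + ζ(4)`. On the other hand, the partial fraction
identity
  `1/(m²n²) = 1/((m+n)²m²) + 2/((m+n)³m) + 1/((m+n)²n²) + 2/((m+n)³n)`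
together with the bijection `(m, n) ↦ (m + n, m)` of `ℕ+ × ℕ+` onto `{(a, b) | a > b}` gives
`2 ζ(2,2) + 4 ζ(3,1)`. Hence `ζ(4) = 4 ζ(3,1)`, and `ζ(4) = π⁴/90`.
-/

open Real

theorem HasSum.of_lowerTriangle_of_diagonal {α E : Type*} [LinearOrder α] [AddCommMonoid E]
    [TopologicalSpace E] [ContinuousAdd E] {f : α × α → E} (hf : ∀ p, f p.swap = f p) {a d : E}
    (ha : HasSum (fun p : {p : α × α // p.2 < p.1} ↦ f p) a) (hd : HasSum (fun x ↦ f (x, x)) d) :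
    HasSum f (a + a + d) := by
  let lower : Set (α × α) := {p | p.2 < p.1}
  let upper : Set (α × α) := {p | p.1 < p.2}
  have hdiag : ∀ p ∈ (lower ∪ upper)ᶜ, p.1 = p.2 := fun p hp ↦ by
    simp only [Set.mem_compl_iff, Set.mem_union, Set.mem_ofPred_eq, not_or, not_lt, lower,
      upper] at hp
    exact le_antisymm hp.1 hp.2
  let swap : upper ≃ lower := (Equiv.prodComm α α).subtypeEquiv fun _ ↦ Iff.rfl
  let diag : ↥(lower ∪ upper)ᶜ ≃ α :=
    { toFun p := p.1.1
      invFun x := ⟨(x, x), by simp [lower, upper]⟩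
      left_inv p := Subtype.ext (Prod.ext rfl (hdiag p p.2))
      right_inv _ := rfl }
  have ha' : HasSum (f ∘ (↑) : lower → E) a := ha
  have hb : HasSum (f ∘ (↑) : upper → E) a :=
    (swap.hasSum_iff.mpr ha).congr_fun fun q ↦ (hf q).symm
  have hc : HasSum (f ∘ (↑) : ↥(lower ∪ upper)ᶜ → E) d :=
    (diag.hasSum_iff.mpr hd).congr_fun fun p ↦ congrArg f (Prod.ext rfl (hdiag p p.2).symm)
  have hdisj : Disjoint lower upper := Set.disjoint_left.mpr fun _ h₁ h₂ ↦ lt_asymm h₁ h₂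
  exact (ha'.add_disjoint hdisj hb).add_compl hc

theorem inv_sq_mul_sq_eq {K : Type*} [Field K] {x y : K} (hx : x ≠ 0) (hy : y ≠ 0)
    (hxy : x + y ≠ 0) :
    (x ^ 2 * y ^ 2)⁻¹ =
      ((x + y) ^ 2 * x ^ 2)⁻¹ + 2 * ((x + y) ^ 3 * x)⁻¹ +
        (((x + y) ^ 2 * y ^ 2)⁻¹ + 2 * ((x + y) ^ 3 * y)⁻¹) := by
  field_simp
  ring

namespace PNat

@[simps]
def prodEquivLowerTriangle : ℕ+ × ℕ+ ≃ {p : ℕ+ × ℕ+ // p.2 < p.1} where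
  toFun p := ⟨(p.1 + p.2, p.1), lt_add_right _ _⟩
  invFun q := (q.1.2, q.1.1 - q.1.2)
  left_inv p := by simp [add_comm p.1, add_sub]
  right_inv q := by ext <;> simp [add_sub_of_lt q.2]

@[simps]
def lowerTriangleEquivNat :
    {p : ℕ+ × ℕ+ // p.2 < p.1} ≃ {p : ℕ × ℕ // p.2 < p.1 ∧ 1 ≤ p.2} where
  toFun q := ⟨(q.1.1, q.1.2), coe_lt_coe _ _ |>.mpr q.2, q.1.2.pos⟩
  invFun p := ⟨(⟨p.1.1, by omega⟩, ⟨p.1.2, p.2.2⟩), p.2.1⟩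
  left_inv _ := rfl
  right_inv _ := rfl

end PNat

lemma hasSum_comp_prodEquivLowerTriangle_add_swap {E : Type*} [AddCommMonoid E]
    [TopologicalSpace E] [ContinuousAdd E] {g : {p : ℕ+ × ℕ+ // p.2 < p.1} → E} {a : E}
    (hg : HasSum g a) :
    HasSum (fun p ↦ g (PNat.prodEquivLowerTriangle p) + g (PNat.prodEquivLowerTriangle p.swap))
      (a + a) :=
  (PNat.prodEquivLowerTriangle.hasSum_iff.mpr hg).add
    ((Equiv.prodComm ℕ+ ℕ+).hasSum_iff.mpr (PNat.prodEquivLowerTriangle.hasSum_iff.mpr hg))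

noncomputable def doubleZetaTerm (s t : ℕ) (p : ℕ+ × ℕ+) : ℝ :=
  ((p.1 : ℝ) ^ s * (p.2 : ℝ) ^ t)⁻¹

noncomputable def doubleZeta (s t : ℕ) : ℝ :=
  ∑' p : {p : ℕ+ × ℕ+ // p.2 < p.1}, doubleZetaTerm s t p

lemma doubleZetaTerm_nonneg (s t : ℕ) (p : ℕ+ × ℕ+) : 0 ≤ doubleZetaTerm s t p := by
  unfold doubleZetaTerm
  positivity

lemma doubleZetaTerm_swap (s : ℕ) (p : ℕ+ × ℕ+) :
    doubleZetaTerm s s p.swap = doubleZetaTerm s s p := by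
  simp only [doubleZetaTerm, Prod.fst_swap, Prod.snd_swap, mul_comm]

lemma summable_doubleZetaTerm_two_two : Summable (doubleZetaTerm 2 2) := by
  have h : Summable fun n : ℕ+ ↦ ((n : ℝ) ^ 2)⁻¹ :=
    (Real.summable_nat_pow_inv.mpr one_lt_two).comp_injective PNat.coe_injective
  refine (h.mul_of_nonneg h (fun _ ↦ by positivity) (fun _ ↦ by positivity)).congr fun p ↦ ?_
  simp only [doubleZetaTerm, mul_inv]

lemma hasSum_inv_pow_four : HasSum (fun n : ℕ+ ↦ ((n : ℝ) ^ 4)⁻¹) (π ^ 4 / 90) := by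
  have h : HasSum (fun n : ℕ ↦ ((n : ℝ) ^ 4)⁻¹) (π ^ 4 / 90 + ((0 : ℕ) ^ 4 : ℝ)⁻¹) := by
    simpa using hasSum_zeta_four
  exact hasSum_pnat_iff.mpr h

lemma hasSum_doubleZetaTerm_two_two_add_swap :
    HasSum (doubleZetaTerm 2 2) (doubleZeta 2 2 + doubleZeta 2 2 + π ^ 4 / 90) :=
  HasSum.of_lowerTriangle_of_diagonal (doubleZetaTerm_swap 2)
    (summable_doubleZetaTerm_two_two.subtype _).hasSum
    (by simpa [doubleZetaTerm, ← pow_add] using hasSum_inv_pow_four)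

lemma hasSum_doubleZetaTerm_two_two_partialFraction :
    HasSum (doubleZetaTerm 2 2) (2 * (doubleZeta 2 2 + 2 * doubleZeta 3 1)) := by
  set e := PNat.prodEquivLowerTriangle
  set g : {p : ℕ+ × ℕ+ // p.2 < p.1} → ℝ := fun q ↦
    doubleZetaTerm 2 2 q + 2 * doubleZetaTerm 3 1 q
  have hg_nonneg (q) : 0 ≤ g q := by
    have := doubleZetaTerm_nonneg 2 2 q
    have := doubleZetaTerm_nonneg 3 1 q
    positivity
  have hpf (p : ℕ+ × ℕ+) : doubleZetaTerm 2 2 p = g (e p) + g (e p.swap) := by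
    have hx : (p.1 : ℝ) ≠ 0 := by positivity
    have hy : (p.2 : ℝ) ≠ 0 := by positivity
    have hxy : (p.1 : ℝ) + p.2 ≠ 0 := by positivity
    simpa [g, e, doubleZetaTerm, add_comm (p.2 : ℝ)] using inv_sq_mul_sq_eq hx hy hxy
  have hg : Summable g := e.summable_iff.mp <| summable_doubleZetaTerm_two_two.of_nonneg_of_le
    (fun _ ↦ hg_nonneg _) fun p ↦ (le_add_of_nonneg_right (hg_nonneg _)).trans (hpf p).ge
  have h22 : Summable fun q : {p : ℕ+ × ℕ+ // p.2 < p.1} ↦ doubleZetaTerm 2 2 q :=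
    summable_doubleZetaTerm_two_two.subtype _
  have h31 : Summable fun q : {p : ℕ+ × ℕ+ // p.2 < p.1} ↦ doubleZetaTerm 3 1 q := by
    refine hg.of_nonneg_of_le (fun _ ↦ doubleZetaTerm_nonneg _ _ _) fun q ↦ ?_
    have := doubleZetaTerm_nonneg 2 2 q
    have := doubleZetaTerm_nonneg 3 1 q
    simp only [g]
    linarith
  have hsum : ∑' q, g q = doubleZeta 2 2 + 2 * doubleZeta 3 1 := by
    rw [h22.tsum_add (h31.mul_left 2), tsum_mul_left, doubleZeta, doubleZeta]
  rw [two_mul, ← hsum]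
  exact (hasSum_comp_prodEquivLowerTriangle_add_swap hg.hasSum).congr_fun hpf

theorem four_mul_doubleZeta_three_one : 4 * doubleZeta 3 1 = π ^ 4 / 90 := by
  linarith [hasSum_doubleZetaTerm_two_two_add_swap.unique
    hasSum_doubleZetaTerm_two_two_partialFraction]

/-- `ζ(3,1) = ∑_{k₁ > k₂ ≥ 1} 1/(k₁³ k₂) = π⁴/360`, i.e. `ζ(4) = 4·ζ(3,1)`. -/
theorem zeta_three_one :
    (∑' p : {p : ℕ × ℕ // p.2 < p.1 ∧ 1 ≤ p.2},
      ((p.1.1 : ℝ) ^ 3 * (p.1.2 : ℝ))⁻¹ = Real.pi ^ 4 / 360) ∧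
    (∑' k : ℕ+, ((k : ℝ) ^ 4)⁻¹ =
      4 * ∑' p : {p : ℕ × ℕ // p.2 < p.1 ∧ 1 ≤ p.2},
        ((p.1.1 : ℝ) ^ 3 * (p.1.2 : ℝ))⁻¹) := by
  have h : ∑' p : {p : ℕ × ℕ // p.2 < p.1 ∧ 1 ≤ p.2}, ((p.1.1 : ℝ) ^ 3 * (p.1.2 : ℝ))⁻¹ =
      doubleZeta 3 1 := by
    rw [doubleZeta, ← PNat.lowerTriangleEquivNat.tsum_eq]
    exact tsum_congr fun q ↦ by simp [doubleZetaTerm]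
  rw [h, hasSum_inv_pow_four.tsum_eq]
  constructor <;> linarith [four_mul_doubleZeta_three_one]
end

section
/- For every real t with |t| < 1, the double polylogarithm Li_{(2,1)}(t) = ∑_{k_1 > k_2 ≥ 1} t^{k_1}/(k_1² k_2) equals the iterated integral ∫_0^t (1/t_1) ∫_0^{t_1} (1/(1-t_2)) ∫_0^{t_2} (1/(1-t_3)) dt_3 dt_2 dt_1. -/
/-!
The two inner integrals evaluate to `-log (1 - t₂)` and then to `log (1 - t₁) ^ 2 / 2`.
On the series side, write `k₂ = m + 1`, `k₁ = m + j + 2`. The Cauchy product of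
`-log (1 - x) = ∑ x ^ (m + 1) / (m + 1)` with `1 / (1 - x) = ∑ x ^ j` expands
`-log (1 - x) / (1 - x)` as a double series in `(m, j)`; integrating it termwise from `0` gives
`log (1 - x) ^ 2 / 2 = ∑ x ^ k₁ / (k₁ k₂)`, and integrating once more after dividing by `x`
gives `∑ t ^ k₁ / (k₁ ^ 2 k₂)`.
-/

open MeasureTheory Set Real intervalIntegral Interval

theorem abs_le_abs_of_mem_uIcc_zero {s t : ℝ} (hs : s ∈ [[0, t]]) : |s| ≤ |t| := by
  simpa using abs_sub_left_of_mem_uIcc hs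

theorem lt_one_of_mem_uIcc_zero {s x : ℝ} (hx : x < 1) (hs : s ∈ [[0, x]]) : s < 1 :=
  hs.2.trans_lt (max_lt one_pos hx)

theorem norm_one_div_le_one {r : ℝ} (hr : 1 ≤ r) : ‖1 / r‖ ≤ 1 := by
  rw [one_div, norm_inv, norm_of_nonneg (zero_le_one.trans hr)]
  exact inv_le_one_of_one_le₀ hr

theorem hasSum_mul_pow_succ_div_integral {ι : Type*} [Countable ι] (a : ι → ℝ) (n : ι → ℕ)
    {t : ℝ} (hs : Summable fun i => ‖a i‖ * |t| ^ n i) :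
    HasSum (fun i => a i * t ^ (n i + 1) / (n i + 1)) (∫ x in (0 : ℝ)..t, ∑' i, a i * x ^ n i) := by
  have hbound : ∀ i, ∀ x ∈ Ι (0 : ℝ) t, ‖a i * x ^ n i‖ ≤ ‖a i‖ * |t| ^ n i := fun i x hx => by
    have hxt : |x| ≤ |t| := abs_le_abs_of_mem_uIcc_zero (uIoc_subset_uIcc hx)
    rw [norm_mul, norm_pow, norm_eq_abs, norm_eq_abs]
    gcongr
  have h := hasSum_integral_of_dominated_convergence (μ := volume) (a := 0) (b := t)
    (fun i _ => ‖a i‖ * |t| ^ n i) (fun i => (by fun_prop : Continuous fun x => a i * x ^ n i)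
      |>.aestronglyMeasurable) (fun i => ae_of_all _ (hbound i)) (ae_of_all _ fun _ _ => hs)
    intervalIntegrable_const
    (ae_of_all _ fun x hx => (hs.of_norm_bounded fun i => hbound i x hx).hasSum)
  have hterm : ∀ i, ∫ x in (0 : ℝ)..t, a i * x ^ n i = a i * t ^ (n i + 1) / (n i + 1) := by
    intro i
    rw [intervalIntegral.integral_const_mul, integral_pow]
    ring
  simpa only [hterm] using h

theorem summable_norm_mul_pow_add_add_one {a : ℕ × ℕ → ℝ} (ha : ∀ q, ‖a q‖ ≤ 1) {x : ℝ}
    (hx : |x| < 1) : Summable fun q : ℕ × ℕ => ‖a q‖ * |x| ^ (q.1 + q.2 + 1) := by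
  have hgeom := summable_geometric_of_lt_one (abs_nonneg x) hx
  have hprod : Summable fun q : ℕ × ℕ => |x| ^ q.1 * |x| ^ q.2 :=
    hgeom.mul_of_nonneg hgeom (fun _ => by positivity) (fun _ => by positivity)
  refine (hprod.mul_left |x|).of_nonneg_of_le (fun _ => by positivity) fun q => ?_
  calc ‖a q‖ * |x| ^ (q.1 + q.2 + 1) ≤ 1 * |x| ^ (q.1 + q.2 + 1) := by gcongr; exact ha q
    _ = |x| * (|x| ^ q.1 * |x| ^ q.2) := by ring

theorem hasSum_neg_log_one_sub_div_one_sub {x : ℝ} (hx : |x| < 1) :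
    HasSum (fun q : ℕ × ℕ => x ^ (q.1 + q.2 + 1) / (q.1 + 1)) (-log (1 - x) / (1 - x)) := by
  have hlog := hasSum_pow_div_log_of_abs_lt_one hx
  have hgeom := hasSum_geometric_of_abs_lt_one hx
  have hprod : Summable fun q : ℕ × ℕ => x ^ (q.1 + 1) / (q.1 + 1) * x ^ q.2 := by
    refine (summable_norm_mul_pow_add_add_one (a := fun q => 1 / (q.1 + 1))
      (fun _ => norm_one_div_le_one (by simp)) hx).of_norm_bounded fun q => le_of_eq ?_
    simp only [norm_mul, norm_div, norm_pow, norm_eq_abs]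
    ring
  rw [div_eq_mul_inv]
  refine (hlog.mul hgeom hprod).congr_fun fun q => ?_
  ring

theorem integral_one_div_one_sub {x : ℝ} (hx : x < 1) :
    ∫ s in (0 : ℝ)..x, 1 / (1 - s) = -log (1 - x) := by
  have hlt : ∀ s ∈ [[0, x]], 1 - s ≠ 0 := fun _ hs =>
    (sub_pos.2 (lt_one_of_mem_uIcc_zero hx hs)).ne'
  rw [integral_eq_sub_of_hasDerivAt (f := fun s => -log (1 - s))]
  · simp
  · intro s hs
    refine (((hasDerivAt_id' s).const_sub 1).log (hlt s hs)).fun_neg.congr_deriv ?_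
    ring
  · exact (continuousOn_const.div (by fun_prop) hlt).intervalIntegrable

theorem integral_neg_log_one_sub_div_one_sub {x : ℝ} (hx : x < 1) :
    ∫ s in (0 : ℝ)..x, -log (1 - s) / (1 - s) = log (1 - x) ^ 2 / 2 := by
  have hlt : ∀ s ∈ [[0, x]], 1 - s ≠ 0 := fun _ hs =>
    (sub_pos.2 (lt_one_of_mem_uIcc_zero hx hs)).ne'
  rw [integral_eq_sub_of_hasDerivAt (f := fun s => log (1 - s) ^ 2 / 2)]
  · simp
  · intro s hs
    refine ((((hasDerivAt_id' s).const_sub 1).log (hlt s hs)).fun_pow 2).div_const 2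
      |>.congr_deriv ?_
    push_cast
    ring
  · exact (((continuousOn_const.sub continuousOn_id).log hlt).neg.div (by fun_prop)
      hlt).intervalIntegrable

theorem integral_one_div_one_sub_mul_integral_one_div_one_sub {x : ℝ} (hx : x < 1) :
    ∫ t₂ in (0 : ℝ)..x, 1 / (1 - t₂) * ∫ t₃ in (0 : ℝ)..t₂, 1 / (1 - t₃) =
      log (1 - x) ^ 2 / 2 := by
  rw [← integral_neg_log_one_sub_div_one_sub hx]
  refine integral_congr fun s hs => ?_
  simp only [integral_one_div_one_sub (lt_one_of_mem_uIcc_zero hx hs)]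
  ring

theorem hasSum_log_one_sub_sq_div_two {x : ℝ} (hx : |x| < 1) :
    HasSum (fun q : ℕ × ℕ => x ^ (q.1 + q.2 + 2) / ((q.1 + q.2 + 2) * (q.1 + 1)))
      (log (1 - x) ^ 2 / 2) := by
  have h := hasSum_mul_pow_succ_div_integral (fun q : ℕ × ℕ => 1 / ((q.1 : ℝ) + 1))
    (fun q => q.1 + q.2 + 1)
    (summable_norm_mul_pow_add_add_one (fun _ => norm_one_div_le_one (by simp)) hx)
  have hint : ∫ s in (0 : ℝ)..x, ∑' q : ℕ × ℕ, 1 / ((q.1 : ℝ) + 1) * s ^ (q.1 + q.2 + 1) =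
      log (1 - x) ^ 2 / 2 := by
    rw [← integral_neg_log_one_sub_div_one_sub (lt_of_abs_lt hx)]
    refine integral_congr fun s hs => ?_
    rw [← (hasSum_neg_log_one_sub_div_one_sub
      ((abs_le_abs_of_mem_uIcc_zero hs).trans_lt hx)).tsum_eq]
    simp only [one_div_mul_eq_div]
  rw [hint] at h
  refine h.congr_fun fun q => ?_
  push_cast
  field_simp
  ring

theorem one_div_mul_log_one_sub_sq_div_two {x : ℝ} (hx : |x| < 1) :
    1 / x * (log (1 - x) ^ 2 / 2) =
      ∑' q : ℕ × ℕ, 1 / (((q.1 + q.2 + 2 : ℕ) : ℝ) * (q.1 + 1)) * x ^ (q.1 + q.2 + 1) := by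
  rw [← (hasSum_log_one_sub_sq_div_two hx).tsum_eq]
  rcases eq_or_ne x 0 with rfl | hx0
  · simp
  rw [← tsum_mul_left]
  refine tsum_congr fun q => ?_
  push_cast
  field_simp
  ring

def pairIndexEquiv : ℕ × ℕ ≃ {p : ℕ × ℕ // p.2 < p.1 ∧ 1 ≤ p.2} where
  toFun q := ⟨(q.1 + q.2 + 2, q.1 + 1), by omega, by omega⟩
  invFun p := (p.1.2 - 1, p.1.1 - p.1.2 - 1)
  left_inv q := by ext <;> dsimp only <;> omega
  right_inv p := by ext <;> dsimp only <;> omega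

/-- For `|t| < 1`, `Li_{(2,1)}(t) = ∑_{k₁ > k₂ ≥ 1} t^{k₁}/(k₁² k₂)` equals the
iterated Chen integral `∫₀^t (1/t₁) ∫₀^{t₁} (1/(1-t₂)) ∫₀^{t₂} (1/(1-t₃)) dt₃ dt₂ dt₁`. -/
theorem Li21_eq_iterated_integral (t : ℝ) (ht : |t| < 1) :
    ∑' p : {p : ℕ × ℕ // p.2 < p.1 ∧ 1 ≤ p.2},
      t ^ p.1.1 / ((p.1.1 : ℝ) ^ 2 * (p.1.2 : ℝ)) =
    ∫ t₁ in (0 : ℝ)..t, (1 / t₁) *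
      ∫ t₂ in (0 : ℝ)..t₁, (1 / (1 - t₂)) *
        ∫ t₃ in (0 : ℝ)..t₂, 1 / (1 - t₃) := by
  have hbound : ∀ q : ℕ × ℕ, ‖1 / (((q.1 + q.2 + 2 : ℕ) : ℝ) * (q.1 + 1))‖ ≤ 1 := fun q =>
    norm_one_div_le_one (by push_cast; nlinarith)
  have hinner : ∀ x ∈ [[0, t]], 1 / x * ∫ t₂ in (0 : ℝ)..x, 1 / (1 - t₂) *
      ∫ t₃ in (0 : ℝ)..t₂, 1 / (1 - t₃) =
      ∑' q : ℕ × ℕ, 1 / (((q.1 + q.2 + 2 : ℕ) : ℝ) * (q.1 + 1)) * x ^ (q.1 + q.2 + 1) := by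
    intro x hx
    have hx1 : |x| < 1 := (abs_le_abs_of_mem_uIcc_zero hx).trans_lt ht
    rw [integral_one_div_one_sub_mul_integral_one_div_one_sub (lt_of_abs_lt hx1),
      one_div_mul_log_one_sub_sq_div_two hx1]
  rw [integral_congr hinner, ← (hasSum_mul_pow_succ_div_integral _ _
    (summable_norm_mul_pow_add_add_one hbound ht)).tsum_eq, ← pairIndexEquiv.tsum_eq]
  refine tsum_congr fun q => ?_
  simp only [pairIndexEquiv, Equiv.coe_fn_mk]
  push_cast
  field_simp
  ring
end

section
/- For every real t with |t| < 1, Li_{(2)}(t)² = 4·Li_{(3,1)}(t) + 2·Li_{(2,2)}(t). -/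
/-!
Multiplying out, `Li₂(t)² = ∑_{a,b ≥ 1} t^(a+b) / (a² b²)`. With `n = a + b`, the partial fraction
decomposition `1/(ab) = (1/n)(1/a + 1/b)` squares to
`1/(a²b²) = (1/n²)(1/a² + 1/b²) + (2/n³)(1/a + 1/b)`,
and the symmetry `a ↔ b` of the double sum turns the right-hand side into
`2·t^n/(n² a²) + 4·t^n/(n³ a)` summed over `n > a ≥ 1`, i.e. `2·Li_{(2,2)}(t) + 4·Li_{(3,1)}(t)`.
All series converge absolutely since their terms are bounded by `|t|^n`.
-/

lemma inv_sq_mul_inv_sq_eq_partial_fractions {K : Type*} [Field K] {a b : K}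
    (ha : a ≠ 0) (hb : b ≠ 0) (hab : a + b ≠ 0) :
    1 / (a ^ 2 * b ^ 2) =
      (1 / (a + b) ^ 2 * (1 / a ^ 2 + 1 / b ^ 2)) + 2 / (a + b) ^ 3 * (1 / a + 1 / b) := by
  field_simp
  ring

def prodEquivLtPairs : ℕ × ℕ ≃ {p : ℕ × ℕ // p.2 < p.1 ∧ 1 ≤ p.2} where
  toFun q := ⟨(q.1 + q.2 + 2, q.1 + 1), by omega, by omega⟩
  invFun p := (p.1.2 - 1, p.1.1 - p.1.2 - 1)
  left_inv q := by ext <;> simp only <;> omega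
  right_inv p := by
    obtain ⟨⟨n, k⟩, hkn, hk⟩ := p
    ext <;> simp only <;> omega

lemma tsum_lt_pairs_eq_tsum_prod {α : Type*} [AddCommMonoid α] [TopologicalSpace α]
    (f : ℕ → ℕ → α) :
    ∑' p : {p : ℕ × ℕ // p.2 < p.1 ∧ 1 ≤ p.2}, f p.1.1 p.1.2 =
      ∑' q : ℕ × ℕ, f (q.1 + q.2 + 2) (q.1 + 1) :=
  (prodEquivLtPairs.tsum_eq fun p => f p.1.1 p.1.2).symm

lemma abs_pow_div_le_abs_pow {t d : ℝ} (ht : |t| ≤ 1) (hd : 1 ≤ d) {m n : ℕ} (hmn : m ≤ n) :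
    |t ^ n / d| ≤ |t| ^ m := by
  rw [abs_div, abs_pow]
  calc |t| ^ n / |d| ≤ |t| ^ n := div_le_self (by positivity) (hd.trans (le_abs_self d))
    _ ≤ |t| ^ m := pow_le_pow_of_le_one (abs_nonneg t) ht hmn

lemma summable_of_abs_le_pow_add {r : ℝ} (hr0 : 0 ≤ r) (hr : r < 1) {f : ℕ × ℕ → ℝ}
    (hf : ∀ q, |f q| ≤ r ^ (q.1 + q.2)) : Summable f := by
  have hg := summable_geometric_of_lt_one hr0 hr
  refine .of_norm_bounded (hg.mul_of_nonneg hg (fun _ => by positivity) fun _ => by positivity) ?_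
  simpa [pow_add] using hf

lemma summable_pow_div_mul_pow {t : ℝ} (ht : |t| < 1) (a b : ℕ) :
    Summable fun q : ℕ × ℕ =>
      t ^ (q.1 + q.2 + 2) / (((q.1 + q.2 + 2 : ℕ) : ℝ) ^ a * ((q.1 + 1 : ℕ) : ℝ) ^ b) :=
  summable_of_abs_le_pow_add (abs_nonneg t) ht fun q =>
    abs_pow_div_le_abs_pow ht.le
      (one_le_mul_of_one_le_of_one_le (one_le_pow₀ (by norm_cast; omega))
        (one_le_pow₀ (by norm_cast; omega)))
      (by omega)

lemma summable_norm_pow_succ_div_sq {t : ℝ} (ht : |t| < 1) :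
    Summable fun k : ℕ => ‖t ^ (k + 1) / ((k : ℝ) + 1) ^ 2‖ :=
  .of_nonneg_of_le (fun _ => norm_nonneg _)
    (fun k => abs_pow_div_le_abs_pow ht.le (one_le_pow₀ (by linarith [k.cast_nonneg' (α := ℝ)]))
      k.le_succ)
    (summable_geometric_of_lt_one (abs_nonneg t) ht)

lemma pow_div_sq_mul_pow_div_sq_eq (t : ℝ) (i j : ℕ) :
    t ^ (i + 1) / ((i : ℝ) + 1) ^ 2 * (t ^ (j + 1) / ((j : ℝ) + 1) ^ 2) =
      (2 * (t ^ (i + j + 2) / (((i + j + 2 : ℕ) : ℝ) ^ 3 * ((i + 1 : ℕ) : ℝ))) +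
          t ^ (i + j + 2) / (((i + j + 2 : ℕ) : ℝ) ^ 2 * ((i + 1 : ℕ) : ℝ) ^ 2)) +
        (2 * (t ^ (j + i + 2) / (((j + i + 2 : ℕ) : ℝ) ^ 3 * ((j + 1 : ℕ) : ℝ))) +
          t ^ (j + i + 2) / (((j + i + 2 : ℕ) : ℝ) ^ 2 * ((j + 1 : ℕ) : ℝ) ^ 2)) := by
  have key := inv_sq_mul_inv_sq_eq_partial_fractions (a := ((i + 1 : ℕ) : ℝ))
    (b := ((j + 1 : ℕ) : ℝ)) (by positivity) (by positivity) (by positivity)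
  rw [← Nat.cast_add, show i + 1 + (j + 1) = i + j + 2 by omega] at key
  rw [div_mul_div_comm, ← pow_add, div_eq_mul_one_div, show i + 1 + (j + 1) = i + j + 2 by omega,
    add_comm j i, ← Nat.cast_succ, ← Nat.cast_succ, key]
  ring

/-- For `|t| < 1`, `Li₂(t)² = 4·Li_{(3,1)}(t) + 2·Li_{(2,2)}(t)`. -/
theorem Li2_sq_eq (t : ℝ) (ht : |t| < 1) :
    (∑' k : ℕ, t ^ (k + 1) / ((k : ℝ) + 1) ^ 2) ^ 2 =
      4 * ∑' p : {p : ℕ × ℕ // p.2 < p.1 ∧ 1 ≤ p.2},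
            t ^ p.1.1 / ((p.1.1 : ℝ) ^ 3 * (p.1.2 : ℝ)) +
      2 * ∑' p : {p : ℕ × ℕ // p.2 < p.1 ∧ 1 ≤ p.2},
            t ^ p.1.1 / ((p.1.1 : ℝ) ^ 2 * (p.1.2 : ℝ) ^ 2) := by
  set F : ℕ × ℕ → ℝ := fun q =>
    t ^ (q.1 + q.2 + 2) / (((q.1 + q.2 + 2 : ℕ) : ℝ) ^ 3 * ((q.1 + 1 : ℕ) : ℝ))
  set G : ℕ × ℕ → ℝ := fun q =>
    t ^ (q.1 + q.2 + 2) / (((q.1 + q.2 + 2 : ℕ) : ℝ) ^ 2 * ((q.1 + 1 : ℕ) : ℝ) ^ 2)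
  have hF : Summable F := by simpa only [pow_one] using summable_pow_div_mul_pow ht 3 1
  have hG : Summable G := summable_pow_div_mul_pow ht 2 2
  have hH : Summable fun q => 2 * F q + G q := (hF.mul_left 2).add hG
  have hL := summable_norm_pow_succ_div_sq ht
  calc _ = ∑' q : ℕ × ℕ, ((2 * F q + G q) + (2 * F q.swap + G q.swap)) := by
        rw [sq, tsum_mul_tsum_of_summable_norm hL hL]
        exact tsum_congr fun q => pow_div_sq_mul_pow_div_sq_eq t q.1 q.2
    _ = 2 * (2 * ∑' q, F q + ∑' q, G q) := by
        have hswap : ∑' q : ℕ × ℕ, (2 * F q.swap + G q.swap) = ∑' q, (2 * F q + G q) :=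
          (Equiv.prodComm ℕ ℕ).tsum_eq fun q => 2 * F q + G q
        have hHswap : Summable fun q : ℕ × ℕ => 2 * F q.swap + G q.swap := hH.prod_symm
        rw [hH.tsum_add hHswap, hswap, (hF.mul_left 2).tsum_add hG, tsum_mul_left]
        ring
    _ = _ := by
        rw [tsum_lt_pairs_eq_tsum_prod fun n k => t ^ n / ((n : ℝ) ^ 3 * (k : ℝ)),
          tsum_lt_pairs_eq_tsum_prod fun n k => t ^ n / ((n : ℝ) ^ 2 * (k : ℝ) ^ 2)]
        ring
end

section
/- The generating function value L_{(2)}(1,1) := ∑_{n=0}^∞ ζ({2}^n) equals sinh(π)/π, where ζ({2}^0) := 1. -/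
/-!
A strictly decreasing tuple of positive integers is the same as a finite set of positive
integers, so `∑ₙ ζ({2}^n)` is the sum over all finite `s ⊆ ℕ` of
`∏_{k ∈ s} (k + 1)⁻²`, which expands the Euler product `∏_{k ≥ 1} (1 + k⁻²)`.
The sine product `sin (π z) = π z ∏ (1 - z² / k²)` at `z = i` evaluates it to `sinh π / π`.
All terms are nonnegative, so the rearrangements are carried out in `ℝ≥0∞`.
-/

open Finset Filter Topology Real
open scoped ENNReal

lemma Real.tendsto_prod_one_add_sq_div_sq {x : ℝ} (hx : x ≠ 0) :
    Tendsto (fun N => ∏ k ∈ range N, (1 + x ^ 2 / ((k : ℝ) + 1) ^ 2)) atTop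
      (𝓝 (sinh (π * x) / (π * x))) := by
  have h := tendsto_euler_sin_prod' (x := x * Complex.I) (by simp [hx])
  rw [← tendsto_ofReal_iff]
  convert h using 2 with N
  · push_cast
    refine prod_congr rfl fun k _ => ?_
    simp [sineTerm, mul_pow]
  · push_cast
    rw [← mul_assoc, Complex.sin_mul_I, mul_div_mul_right _ _ Complex.I_ne_zero]

lemma ENNReal.tsum_finset_prod_ofReal_of_tendsto {w : ℕ → ℝ} (hw : ∀ k, 0 ≤ w k) {P : ℝ}
    (h : Tendsto (fun N => ∏ k ∈ range N, (1 + w k)) atTop (𝓝 P)) :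
    ∑' s : Finset ℕ, ∏ k ∈ s, ENNReal.ofReal (w k) = ENNReal.ofReal P := by
  refine tendsto_nhds_unique
    (hasProd_one_add_of_hasSum_prod ENNReal.summable.hasSum).tendsto_prod_nat ?_
  convert (ENNReal.continuous_ofReal.tendsto P).comp h with N
  rw [Function.comp_apply, ENNReal.ofReal_prod_of_nonneg fun k _ => add_nonneg zero_le_one (hw k)]
  refine prod_congr rfl fun k _ => ?_
  rw [ENNReal.ofReal_add zero_le_one (hw k), ENNReal.ofReal_one]

lemma tsum_tsum_eq_of_tsum_tsum_ofReal_eq {ι : Type*} {β : ι → Type*} {f : ∀ i, β i → ℝ}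
    (hf : ∀ i b, 0 ≤ f i b) {c : ℝ} (hc : 0 ≤ c)
    (h : ∑' i, ∑' b, ENNReal.ofReal (f i b) = ENNReal.ofReal c) :
    ∑' i, ∑' b, f i b = c := by
  rw [← ENNReal.tsum_sigma] at h
  have hs : Summable fun p : Σ i, β i => f p.1 p.2 := by
    convert ENNReal.summable_toReal (h ▸ ENNReal.ofReal_ne_top) with p
    exact (ENNReal.toReal_ofReal (hf _ _)).symm
  rw [← hs.tsum_sigma, ← ENNReal.ofReal_eq_ofReal_iff (tsum_nonneg fun p => hf _ _) hc,
    ENNReal.ofReal_tsum_of_nonneg (fun p => hf _ _) hs, h]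

abbrev DecreasingPosTuple (n : ℕ) := {f : Fin n → ℕ // StrictAnti f ∧ ∀ i, 1 ≤ f i}

namespace DecreasingPosTuple

def equivOrderEmbedding (n : ℕ) : DecreasingPosTuple n ≃ (Fin n ↪o ℕ) where
  toFun f := OrderEmbedding.ofStrictMono (fun i => f.1 i.rev - 1) fun _ _ hij =>
    Nat.sub_lt_sub_right (f.2.2 _) (f.2.1 (Fin.rev_lt_rev.2 hij))
  invFun g := ⟨fun i => g i.rev + 1, fun _ _ hij => by simpa using Fin.rev_lt_rev.2 hij,
    fun _ => Nat.le_add_left _ _⟩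
  left_inv f := Subtype.ext <| funext fun i => by
    show f.1 i.rev.rev - 1 + 1 = f.1 i
    rw [Fin.rev_rev, Nat.sub_add_cancel (f.2.2 i)]
  right_inv g := by ext i; simp

def equivPowersetCard (n : ℕ) : DecreasingPosTuple n ≃ Set.powersetCard ℕ n :=
  (equivOrderEmbedding n).trans Set.powersetCard.ofFinEmbEquiv

lemma prod_comp_eq_prod_equivPowersetCard {n : ℕ} {M : Type*} [CommMonoid M] (g : ℕ → M)
    (f : DecreasingPosTuple n) :
    ∏ i, g (f.1 i) = ∏ k ∈ (equivPowersetCard n f).1, g (k + 1) := by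
  simp only [equivPowersetCard, Equiv.trans_apply, Set.powersetCard.ofFinEmbEquiv_apply,
    Set.powersetCard.val_ofFinEmb, prod_map]
  rw [← Equiv.prod_comp Fin.revPerm]
  refine Fintype.prod_congr _ _ fun i => ?_
  show g (f.1 i.rev) = g (f.1 i.rev - 1 + 1)
  rw [Nat.sub_add_cancel (f.2.2 _)]

lemma tsum_tsum_prod_eq_tsum_finset_prod (g : ℕ → ℝ≥0∞) :
    ∑' n, ∑' f : DecreasingPosTuple n, ∏ i, g (f.1 i) =
      ∑' s : Finset ℕ, ∏ k ∈ s, g (k + 1) := by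
  rw [← ENNReal.tsum_fiberwise (fun s : Finset ℕ => ∏ k ∈ s, g (k + 1)) card]
  exact tsum_congr fun n => (tsum_congr (prod_comp_eq_prod_equivPowersetCard g)).trans
    ((equivPowersetCard n).tsum_eq fun s => ∏ k ∈ s.1, g (k + 1))

end DecreasingPosTuple

/-- `L_{(2)}(1,1) = ∑_{n≥0} ζ({2}^n) = sinh(π)/π` (with `ζ({2}^0) = 1`). -/
theorem generating_function_L2_at_one :
    ∑' n : ℕ,
      ∑' k : {f : Fin n → ℕ // (∀ i j : Fin n, i < j → f j < f i) ∧ ∀ i, 1 ≤ f i},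
        ∏ i, ((k.1 i : ℝ) ^ 2)⁻¹ =
    Real.sinh Real.pi / Real.pi := by
  have euler : Tendsto (fun N => ∏ k ∈ range N, (1 + (((k : ℝ) + 1) ^ 2)⁻¹)) atTop
      (𝓝 (sinh π / π)) := by
    simpa using Real.tendsto_prod_one_add_sq_div_sq one_ne_zero
  refine tsum_tsum_eq_of_tsum_tsum_ofReal_eq (fun _ _ => by positivity)
    (div_nonneg (sinh_nonneg_iff.2 pi_nonneg) pi_nonneg) ?_
  calc ∑' n, ∑' f : DecreasingPosTuple n, ENNReal.ofReal (∏ i, ((f.1 i : ℝ) ^ 2)⁻¹)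
      = ∑' n, ∑' f : DecreasingPosTuple n, ∏ i, ENNReal.ofReal (((f.1 i : ℝ) ^ 2)⁻¹) :=
        tsum_congr fun _ => tsum_congr fun _ =>
          ENNReal.ofReal_prod_of_nonneg fun _ _ => inv_nonneg.2 (sq_nonneg _)
    _ = ∑' s : Finset ℕ, ∏ k ∈ s, ENNReal.ofReal ((((k + 1 : ℕ) : ℝ) ^ 2)⁻¹) :=
        DecreasingPosTuple.tsum_tsum_prod_eq_tsum_finset_prod
          fun m => ENNReal.ofReal (((m : ℝ) ^ 2)⁻¹)
    _ = ENNReal.ofReal (sinh π / π) := by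
        push_cast
        exact ENNReal.tsum_finset_prod_ofReal_of_tendsto (fun _ => by positivity) euler
end

section
/- For every real θ, the series L_{(2)}(t,θ) = ∑_{n=0}^∞ Li_{{2}^n}(t) θ^{2n} converges for all t with |t| ≤ 1 and, for 0 < t < 1, satisfies the second-order differential equation (1-t) d/dt ( t d/dt L ) = θ² L. -/
open scoped ENNReal
/-- The periodic multiple polylogarithm `Li_{{2}^n}(t)` (with `Li_{{2}^0}(t) = 1`). -/
noncomputable def Li2pow (n : ℕ) (t : ℝ) : ℝ :=
  ∑' k : {f : Fin n → ℕ // (∀ i j : Fin n, i < j → f j < f i) ∧ ∀ i, 1 ≤ f i},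
    (if h : 0 < n then t ^ k.1 ⟨0, h⟩ else 1) * ∏ i, ((k.1 i : ℝ) ^ 2)⁻¹

/-- The generating function `L_{(2)}(t,θ) = ∑_{n≥0} Li_{{2}^n}(t) θ^{2n}`. -/
noncomputable def L2gen (t θ : ℝ) : ℝ := ∑' n : ℕ, Li2pow n t * θ ^ (2 * n)

namespace L2genAux

abbrev Dn (n : ℕ) := {f : Fin n → ℕ // (∀ i j : Fin n, i < j → f j < f i) ∧ ∀ i, 1 ≤ f i}

def topv : ∀ {n : ℕ}, (Fin n → ℕ) → ℕ
  | 0, _ => 0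
  | _ + 1, f => f 0

lemma apply_le_topv {n : ℕ} (g : Dn n) (m : Fin n) : g.1 m ≤ topv g.1 := by
  cases n with
  | zero => exact m.elim0
  | succ n =>
    show g.1 m ≤ g.1 0
    rcases eq_or_ne m 0 with h | h
    · rw [h]
    · exact (g.2.1 0 m (Fin.pos_of_ne_zero h)).le

def consEquiv (n k : ℕ) :
    {f : Dn (n + 1) // topv f.1 = k} ≃ {g : Dn n // topv g.1 < k} where
  toFun f := ⟨⟨fun i => f.1.1 i.succ,
      fun i j hij => f.1.2.1 i.succ j.succ (Fin.succ_lt_succ_iff.mpr hij),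
      fun i => f.1.2.2 i.succ⟩, by
    have hk : f.1.1 0 = k := f.2
    cases n with
    | zero =>
      show (0 : ℕ) < k
      have h1 : 1 ≤ f.1.1 0 := f.1.2.2 0
      omega
    | succ m =>
      show f.1.1 (0 : Fin (m + 1)).succ < k
      have h2 := f.1.2.1 0 (Fin.succ 0) (Fin.succ_pos 0)
      omega⟩
  invFun g := ⟨⟨Fin.cons k g.1.1,
      by
        intro i j hij
        induction j using Fin.cases with
        | zero => simp at hij
        | succ j =>
          induction i using Fin.cases with
          | zero =>
            simp only [Fin.cons_succ, Fin.cons_zero]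
            exact lt_of_le_of_lt (apply_le_topv g.1 j) g.2
          | succ i =>
            simp only [Fin.cons_succ]
            exact g.1.2.1 i j (by simpa using hij),
      by
        intro i
        induction i using Fin.cases with
        | zero =>
          simp only [Fin.cons_zero]
          have h2 := g.2
          omega
        | succ i =>
          simp only [Fin.cons_succ]
          exact g.1.2.2 i⟩,
    by simp [topv]⟩
  left_inv f := by
    apply Subtype.ext; apply Subtype.ext
    funext i
    dsimp only
    induction i using Fin.cases with
    | zero => rw [Fin.cons_zero]; exact f.2.symm
    | succ i => rw [Fin.cons_succ]
  right_inv g := by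
    apply Subtype.ext; apply Subtype.ext
    funext i
    dsimp only
    rw [Fin.cons_succ]

noncomputable def w {n : ℕ} (f : Fin n → ℕ) : ℝ≥0∞ := ∏ i, ((f i : ℝ≥0∞) ^ 2)⁻¹

lemma w_ne_top {n : ℕ} (f : Fin n → ℕ) (hf : ∀ i, 1 ≤ f i) : w f ≠ ⊤ := by
  have h : ∀ i ∈ Finset.univ, ((f i : ℝ≥0∞) ^ 2)⁻¹ ≠ ⊤ := by
    intro i _
    rw [Ne, ENNReal.inv_eq_top]
    exact pow_ne_zero _ (by exact_mod_cast Nat.one_le_iff_ne_zero.mp (hf i))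
  exact (ENNReal.prod_lt_top (fun i hi => (h i hi).lt_top)).ne

noncomputable def bet (n k : ℕ) : ℝ≥0∞ := ∑' f : {f : Dn n // topv f.1 = k}, w f.1.1

lemma tsum_topv (n : ℕ) (c : ℕ → ℝ≥0∞) :
    ∑' f : Dn n, c (topv f.1) * w f.1 = ∑' k : ℕ, c k * bet n k := by
  rw [← Equiv.tsum_eq (Equiv.sigmaFiberEquiv (fun f : Dn n => topv f.1))
      (fun f => c (topv f.1) * w f.1)]
  have h : ∀ p : Σ k : ℕ, {f : Dn n // topv f.1 = k},
      c (topv ((Equiv.sigmaFiberEquiv (fun f : Dn n => topv f.1)) p).1) *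
        w ((Equiv.sigmaFiberEquiv (fun f : Dn n => topv f.1)) p).1 =
      (fun (k : ℕ) (x : {f : Dn n // topv f.1 = k}) => c k * w x.1.1) p.1 p.2 := by
    rintro ⟨k, f, hf⟩
    simp [Equiv.sigmaFiberEquiv, hf]
  rw [tsum_congr h, ENNReal.tsum_sigma
    (fun (k : ℕ) (x : {f : Dn n // topv f.1 = k}) => c k * w x.1.1)]
  exact tsum_congr fun k => ENNReal.tsum_mul_left

lemma bet_succ (n k : ℕ) :
    bet (n + 1) k = ((k : ℝ≥0∞) ^ 2)⁻¹ * ∑ j ∈ Finset.range k, bet n j := by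
  rw [bet, ← Equiv.tsum_eq (consEquiv n k).symm (fun f => w f.1.1)]
  have hterm : ∀ g : {g : Dn n // topv g.1 < k},
      w (((consEquiv n k).symm g)).1.1 = ((k : ℝ≥0∞) ^ 2)⁻¹ * w g.1.1 := by
    intro g
    have h1 : (((consEquiv n k).symm g)).1.1 = (Fin.cons k g.1.1 : Fin (n + 1) → ℕ) := rfl
    rw [h1, w]
    have h2 : (fun i : Fin (n + 1) => (((Fin.cons k g.1.1 : Fin (n + 1) → ℕ) i : ℝ≥0∞) ^ 2)⁻¹)
        = (Fin.cons (((k : ℝ≥0∞) ^ 2)⁻¹) (fun i => ((g.1.1 i : ℝ≥0∞) ^ 2)⁻¹)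
            : Fin (n + 1) → ℝ≥0∞) := by
      funext i
      induction i using Fin.cases with
      | zero => rw [Fin.cons_zero, Fin.cons_zero]
      | succ i => rw [Fin.cons_succ, Fin.cons_succ]
    calc ∏ i : Fin (n + 1), (((Fin.cons k g.1.1 : Fin (n + 1) → ℕ) i : ℝ≥0∞) ^ 2)⁻¹
        = ∏ i : Fin (n + 1),
            (Fin.cons (((k : ℝ≥0∞) ^ 2)⁻¹) (fun i => ((g.1.1 i : ℝ≥0∞) ^ 2)⁻¹)
              : Fin (n + 1) → ℝ≥0∞) i := by rw [h2]
      _ = ((k : ℝ≥0∞) ^ 2)⁻¹ * ∏ i : Fin n, ((g.1.1 i : ℝ≥0∞) ^ 2)⁻¹ := Fin.prod_cons _ _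
      _ = ((k : ℝ≥0∞) ^ 2)⁻¹ * w g.1.1 := rfl
  rw [tsum_congr hterm, ENNReal.tsum_mul_left]
  congr 1
  have h3 : ∑' g : {g : Dn n // topv g.1 < k}, w g.1.1
      = ∑' g : Dn n, Set.indicator {g : Dn n | topv g.1 < k} (fun g => w g.1) g :=
    tsum_subtype {g : Dn n | topv g.1 < k} (fun g => w g.1)
  rw [h3]
  have h4 : ∀ g : Dn n, Set.indicator {g : Dn n | topv g.1 < k} (fun g => w g.1) g
      = (fun j => if j < k then (1 : ℝ≥0∞) else 0) (topv g.1) * w g.1 := by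
    intro g
    rw [Set.indicator_apply]
    simp only [Set.mem_setOf_eq]
    by_cases h : topv g.1 < k
    · rw [if_pos h, if_pos h, one_mul]
    · rw [if_neg h, if_neg h, zero_mul]
  rw [tsum_congr h4, tsum_topv n (fun j => if j < k then (1 : ℝ≥0∞) else 0)]
  rw [tsum_eq_sum (s := Finset.range k) (by
    intro j hj
    rw [if_neg (by simpa using hj), zero_mul])]
  exact Finset.sum_congr rfl fun j hj => by rw [if_pos (Finset.mem_range.mp hj), one_mul]

lemma bet_zero (k : ℕ) : bet 0 k = if k = 0 then 1 else 0 := by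
  rcases eq_or_ne k 0 with hk | hk
  · subst hk
    rw [if_pos rfl, bet]
    haveI : Unique {f : Dn 0 // topv f.1 = 0} :=
      { default := ⟨⟨fun i => i.elim0, fun i j _ => i.elim0, fun i => i.elim0⟩, rfl⟩
        uniq := fun x => Subtype.ext (Subtype.ext (funext fun i => i.elim0)) }
    rw [tsum_eq_single (default : {f : Dn 0 // topv f.1 = 0})
      (fun b hb => absurd (Subsingleton.elim b default) hb)]
    simp [w]
  · rw [if_neg hk]
    haveI : IsEmpty {f : Dn 0 // topv f.1 = k} := ⟨fun x => hk (by exact x.2.symm)⟩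
    rw [bet, tsum_empty]

noncomputable def Ahat (v : ℝ≥0∞) (k : ℕ) : ℝ≥0∞ := ∑' n : ℕ, v ^ n * bet n k

lemma Ahat_hist (v : ℝ≥0∞) (k : ℕ) :
    Ahat v k = bet 0 k + v * (((k : ℝ≥0∞) ^ 2)⁻¹ * ∑ j ∈ Finset.range k, Ahat v j) := by
  rw [Ahat, tsum_eq_zero_add' ENNReal.summable, pow_zero, one_mul]
  congr 1
  have h1 : ∀ n : ℕ, v ^ (n + 1) * bet (n + 1) k
      = v * (((k : ℝ≥0∞) ^ 2)⁻¹ * ∑ j ∈ Finset.range k, v ^ n * bet n j) := by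
    intro n
    rw [bet_succ, pow_succ]
    simp only [Finset.mul_sum]
    exact Finset.sum_congr rfl fun j _ => by ring
  rw [tsum_congr h1, ENNReal.tsum_mul_left]
  congr 1
  rw [ENNReal.tsum_mul_left]
  congr 1
  exact Summable.tsum_finsetSum (fun j _ => ENNReal.summable)

lemma Ahat_zero (v : ℝ≥0∞) : Ahat v 0 = 1 := by
  rw [Ahat_hist, bet_zero]
  simp

lemma Ahat_mul (v : ℝ≥0∞) {k : ℕ} (hk : k ≠ 0) :
    (k : ℝ≥0∞) ^ 2 * Ahat v k = v * ∑ j ∈ Finset.range k, Ahat v j := by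
  have h2 : ((k : ℝ≥0∞) ^ 2) ≠ 0 := pow_ne_zero _ (Nat.cast_ne_zero.mpr hk)
  have h3 : ((k : ℝ≥0∞) ^ 2) ≠ ⊤ := by
    exact ENNReal.pow_ne_top (ENNReal.natCast_ne_top k)
  rw [Ahat_hist, bet_zero, if_neg hk, zero_add]
  calc (k : ℝ≥0∞) ^ 2 * (v * (((k : ℝ≥0∞) ^ 2)⁻¹ * ∑ j ∈ Finset.range k, Ahat v j))
      = v * (((k : ℝ≥0∞) ^ 2 * ((k : ℝ≥0∞) ^ 2)⁻¹) * ∑ j ∈ Finset.range k, Ahat v j) := by ring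
    _ = v * ∑ j ∈ Finset.range k, Ahat v j := by
        rw [ENNReal.mul_inv_cancel h2 h3, one_mul]

lemma Ahat_rec (v : ℝ≥0∞) (k : ℕ) :
    ((k : ℝ≥0∞) + 1) ^ 2 * Ahat v (k + 1) = ((k : ℝ≥0∞) ^ 2 + v) * Ahat v k := by
  have h1 : (((k + 1 : ℕ)) : ℝ≥0∞) ^ 2 * Ahat v (k + 1)
      = v * ∑ j ∈ Finset.range (k + 1), Ahat v j := Ahat_mul v (Nat.succ_ne_zero k)
  have h2 : v * ∑ j ∈ Finset.range k, Ahat v j = (k : ℝ≥0∞) ^ 2 * Ahat v k := by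
    rcases eq_or_ne k 0 with rfl | hk
    · simp
    · exact (Ahat_mul v hk).symm
  push_cast at h1
  rw [h1, Finset.sum_range_succ, mul_add, h2, add_mul]

lemma Ahat_ne_top {v : ℝ≥0∞} (hv : v ≠ ⊤) : ∀ k, Ahat v k ≠ ⊤ := by
  intro k
  induction k using Nat.strong_induction_on with
  | _ k ih =>
    rcases eq_or_ne k 0 with rfl | hk
    · rw [Ahat_zero]; exact ENNReal.one_ne_top
    · rw [Ahat_hist, bet_zero, if_neg hk, zero_add]
      refine ENNReal.mul_ne_top hv (ENNReal.mul_ne_top ?_ ?_)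
      · exact ENNReal.inv_ne_top.mpr (pow_ne_zero _ (Nat.cast_ne_zero.mpr hk))
      · refine (ENNReal.sum_lt_top.mpr fun j hj => ?_).ne
        exact (ih j (Finset.mem_range.mp hj)).lt_top

noncomputable def aa (θ : ℝ) (k : ℕ) : ℝ := (Ahat (ENNReal.ofReal (θ ^ 2)) k).toReal

lemma aa_nonneg (θ : ℝ) (k : ℕ) : 0 ≤ aa θ k := ENNReal.toReal_nonneg

lemma aa_zero (θ : ℝ) : aa θ 0 = 1 := by rw [aa, Ahat_zero, ENNReal.toReal_one]

lemma aa_rec (θ : ℝ) (k : ℕ) :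
    ((k : ℝ) + 1) ^ 2 * aa θ (k + 1) = ((k : ℝ) ^ 2 + θ ^ 2) * aa θ k := by
  have h := congrArg ENNReal.toReal (Ahat_rec (ENNReal.ofReal (θ ^ 2)) k)
  simp only [ENNReal.toReal_mul, ENNReal.toReal_pow,
    ENNReal.toReal_add (ENNReal.natCast_ne_top k) ENNReal.one_ne_top,
    ENNReal.toReal_add (ENNReal.pow_ne_top (ENNReal.natCast_ne_top k)) ENNReal.ofReal_ne_top,
    ENNReal.toReal_natCast, ENNReal.toReal_one, ENNReal.toReal_ofReal (sq_nonneg θ)] at h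
  exact h

lemma aa_closed (θ : ℝ) : ∀ k : ℕ,
    ((k : ℝ) + 1) ^ 2 * aa θ (k + 1) = θ ^ 2 * ∏ j ∈ Finset.range k, (1 + θ ^ 2 / ((j : ℝ) + 1) ^ 2) := by
  intro k
  induction k with
  | zero => rw [aa_rec, aa_zero]; norm_num
  | succ k ih =>
    have hne : ((k : ℝ) + 1) ^ 2 ≠ 0 := by positivity
    have haa : aa θ (k + 1)
        = θ ^ 2 * (∏ j ∈ Finset.range k, (1 + θ ^ 2 / ((j : ℝ) + 1) ^ 2)) / ((k : ℝ) + 1) ^ 2 := by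
      rw [eq_div_iff hne]; linear_combination ih
    have h2 := aa_rec θ (k + 1)
    push_cast at h2 ⊢
    rw [h2, haa, Finset.prod_range_succ]
    field_simp

lemma sum_inv_sq_le : ∀ k : ℕ, ∑ j ∈ Finset.range k, (1 : ℝ) / ((j : ℝ) + 1) ^ 2 ≤ 2 := by
  have aux : ∀ k : ℕ, ∑ j ∈ Finset.range (k + 1), (1 : ℝ) / ((j : ℝ) + 1) ^ 2
      ≤ 2 - 1 / ((k : ℝ) + 1) := by
    intro k
    induction k with
    | zero => norm_num
    | succ k ih =>
      rw [Finset.sum_range_succ]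
      have h1 : (0 : ℝ) < (k : ℝ) + 1 := by positivity
      have h2 : (0 : ℝ) < (k : ℝ) + 2 := by positivity
      have key : (1 : ℝ) / (((k + 1 : ℕ) : ℝ) + 1) ^ 2 ≤ 1 / ((k : ℝ) + 1) - 1 / ((k : ℝ) + 2) := by
        push_cast
        rw [div_sub_div _ _ (ne_of_gt h1) (ne_of_gt h2)]
        rw [div_le_div_iff₀ (by positivity) (by positivity)]
        ring_nf
        nlinarith
      push_cast at ih key ⊢
      rw [show ((k : ℝ) + 1 + 1) = (k : ℝ) + 2 from by ring] at key ⊢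
      linarith
  intro k
  cases k with
  | zero => simp
  | succ k =>
    refine (aux k).trans ?_
    have : (0 : ℝ) < (k : ℝ) + 1 := by positivity
    have : 0 < 1 / ((k : ℝ) + 1) := by positivity
    linarith

lemma prod_le_exp (θ : ℝ) (k : ℕ) :
    ∏ j ∈ Finset.range k, (1 + θ ^ 2 / ((j : ℝ) + 1) ^ 2) ≤ Real.exp (2 * θ ^ 2) := by
  have h1 : ∏ j ∈ Finset.range k, (1 + θ ^ 2 / ((j : ℝ) + 1) ^ 2)
      ≤ ∏ j ∈ Finset.range k, Real.exp (θ ^ 2 / ((j : ℝ) + 1) ^ 2) := by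
    refine Finset.prod_le_prod (fun j _ => by positivity) (fun j _ => ?_)
    rw [add_comm]
    exact Real.add_one_le_exp _
  refine h1.trans ?_
  rw [← Real.exp_sum]
  refine Real.exp_le_exp.mpr ?_
  have h2 : ∑ j ∈ Finset.range k, θ ^ 2 / ((j : ℝ) + 1) ^ 2
      = θ ^ 2 * ∑ j ∈ Finset.range k, (1 : ℝ) / ((j : ℝ) + 1) ^ 2 := by
    rw [Finset.mul_sum]
    exact Finset.sum_congr rfl fun j _ => by ring
  rw [h2, two_mul]
  nlinarith [sum_inv_sq_le k, sq_nonneg θ]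

lemma aa_le (θ : ℝ) (k : ℕ) :
    aa θ (k + 1) ≤ θ ^ 2 * Real.exp (2 * θ ^ 2) / ((k : ℝ) + 1) ^ 2 := by
  have hne : ((k : ℝ) + 1) ^ 2 ≠ 0 := by positivity
  have h1 : aa θ (k + 1)
      = θ ^ 2 * (∏ j ∈ Finset.range k, (1 + θ ^ 2 / ((j : ℝ) + 1) ^ 2)) / ((k : ℝ) + 1) ^ 2 := by
    rw [eq_div_iff hne]; linear_combination aa_closed θ k
  rw [h1]
  apply div_le_div_of_nonneg_right ?_ (by positivity)
  exact mul_le_mul_of_nonneg_left (prod_le_exp θ k) (sq_nonneg θ)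

lemma aa_le_C (θ : ℝ) (k : ℕ) : aa θ k ≤ max 1 (θ ^ 2 * Real.exp (2 * θ ^ 2)) := by
  cases k with
  | zero => rw [aa_zero]; exact le_max_left _ _
  | succ k =>
    refine (aa_le θ k).trans (le_trans ?_ (le_max_right _ _))
    have h1 : (1 : ℝ) ≤ ((k : ℝ) + 1) ^ 2 := by nlinarith [Nat.cast_nonneg (α := ℝ) k]
    exact div_le_self (by positivity) h1

lemma summable_aa (θ : ℝ) : Summable (aa θ) := by
  rw [← summable_nat_add_iff 1]
  have hs : Summable (fun k : ℕ => θ ^ 2 * Real.exp (2 * θ ^ 2) * (1 / ((k : ℝ) + 1) ^ 2)) := by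
    apply Summable.mul_left
    have := (summable_nat_add_iff (f := fun n : ℕ => 1 / (n : ℝ) ^ 2) 1).mpr ?_
    · refine this.congr fun k => ?_
      push_cast
      rfl
    · exact (Real.summable_one_div_nat_pow).mpr one_lt_two
  refine Summable.of_nonneg_of_le (fun k => aa_nonneg θ (k + 1)) (fun k => ?_) hs
  refine (aa_le θ k).trans ?_
  rw [div_eq_mul_one_div]

noncomputable def PP (n : ℕ) (τ : ℝ≥0∞) : ℝ≥0∞ := ∑' f : Dn n, τ ^ topv f.1 * w f.1

lemma PP_eq (n : ℕ) (τ : ℝ≥0∞) : PP n τ = ∑' k : ℕ, τ ^ k * bet n k := tsum_topv n (τ ^ ·)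

lemma T_eq (τ v : ℝ≥0∞) : ∑' n : ℕ, v ^ n * PP n τ = ∑' k : ℕ, τ ^ k * Ahat v k := by
  calc ∑' n : ℕ, v ^ n * PP n τ
      = ∑' (n : ℕ) (k : ℕ), v ^ n * (τ ^ k * bet n k) := by
        refine tsum_congr fun n => ?_
        rw [PP_eq, ENNReal.tsum_mul_left]
    _ = ∑' (k : ℕ) (n : ℕ), v ^ n * (τ ^ k * bet n k) := ENNReal.tsum_comm
    _ = ∑' k : ℕ, τ ^ k * Ahat v k := by
        refine tsum_congr fun k => ?_
        have h : ∀ n : ℕ, v ^ n * (τ ^ k * bet n k) = τ ^ k * (v ^ n * bet n k) :=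
          fun n => by ring
        rw [tsum_congr h, ENNReal.tsum_mul_left]
        rfl

lemma sumAhat_ne_top (θ : ℝ) : ∑' k : ℕ, Ahat (ENNReal.ofReal (θ ^ 2)) k ≠ ⊤ := by
  have h1 : ∀ k, Ahat (ENNReal.ofReal (θ ^ 2)) k = ENNReal.ofReal (aa θ k) := fun k =>
    (ENNReal.ofReal_toReal (Ahat_ne_top ENNReal.ofReal_ne_top k)).symm
  rw [tsum_congr h1, ← ENNReal.ofReal_tsum_of_nonneg (aa_nonneg θ) (summable_aa θ)]
  exact ENNReal.ofReal_ne_top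

lemma T_ne_top {τ : ℝ≥0∞} (hτ : τ ≤ 1) (θ : ℝ) :
    ∑' n : ℕ, (ENNReal.ofReal (θ ^ 2)) ^ n * PP n τ ≠ ⊤ := by
  rw [T_eq]
  refine ne_top_of_le_ne_top (sumAhat_ne_top θ) (Summable.tsum_le_tsum (fun k => ?_)
    ENNReal.summable ENNReal.summable)
  calc τ ^ k * Ahat _ k ≤ 1 * Ahat _ k :=
        mul_le_mul' (pow_le_one' hτ k) le_rfl
    _ = Ahat _ k := one_mul _

lemma PP_one_ne_top (n : ℕ) : PP n 1 ≠ ⊤ := by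
  have h2 : ∑' m : ℕ, (ENNReal.ofReal ((1 : ℝ) ^ 2)) ^ m * PP m 1 ≠ ⊤ := T_ne_top le_rfl 1
  refine ne_top_of_le_ne_top h2 ?_
  have h3 : PP n 1 = (ENNReal.ofReal ((1 : ℝ) ^ 2)) ^ n * PP n 1 := by norm_num
  rw [h3]
  exact ENNReal.le_tsum n

lemma PP_ne_top {τ : ℝ≥0∞} (hτ : τ ≤ 1) (n : ℕ) : PP n τ ≠ ⊤ := by
  refine ne_top_of_le_ne_top (PP_one_ne_top n) (Summable.tsum_le_tsum (fun f => ?_)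
    ENNReal.summable ENNReal.summable)
  exact mul_le_mul' (le_trans (pow_le_one' hτ _) (by norm_num)) le_rfl

noncomputable def wR {n : ℕ} (f : Fin n → ℕ) : ℝ := ∏ i, ((f i : ℝ) ^ 2)⁻¹

lemma wR_nonneg {n : ℕ} (f : Fin n → ℕ) : 0 ≤ wR f :=
  Finset.prod_nonneg fun i _ => by positivity

lemma wR_eq {n : ℕ} (f : Fin n → ℕ) : (w f).toReal = wR f := by
  rw [w, wR, ENNReal.toReal_prod]
  refine Finset.prod_congr rfl fun i _ => ?_
  rw [ENNReal.toReal_inv, ENNReal.toReal_pow, ENNReal.toReal_natCast]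

lemma dite_eq_pow (n : ℕ) (t : ℝ) (f : Dn n) :
    (if h : 0 < n then t ^ f.1 ⟨0, h⟩ else 1) = t ^ topv f.1 := by
  cases n with
  | zero => rw [dif_neg (lt_irrefl 0)]; exact (pow_zero t).symm
  | succ n =>
    rw [dif_pos (Nat.succ_pos n)]
    have h0 : (⟨0, Nat.succ_pos n⟩ : Fin (n + 1)) = 0 := Fin.ext (by simp)
    rw [h0]
    rfl

lemma Li2pow_eq (n : ℕ) (t : ℝ) : Li2pow n t = ∑' f : Dn n, t ^ topv f.1 * wR f.1 := by
  rw [Li2pow]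
  exact tsum_congr fun f => by rw [dite_eq_pow n t f]; rfl

lemma tsum_w_eq_PP_one (n : ℕ) : ∑' f : Dn n, w f.1 = PP n 1 :=
  (tsum_congr fun f => by rw [one_pow, one_mul]).symm

lemma summable_wtoReal (n : ℕ) : Summable (fun f : Dn n => (w f.1).toReal) :=
  ENNReal.summable_toReal (by rw [tsum_w_eq_PP_one]; exact PP_one_ne_top n)

lemma summable_wR (n : ℕ) : Summable (fun f : Dn n => wR f.1) :=
  (summable_wtoReal n).congr fun f => wR_eq f.1

lemma FR_abs_le {n : ℕ} {t : ℝ} (ht : |t| ≤ 1) (f : Dn n) :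
    |t ^ topv f.1 * wR f.1| ≤ wR f.1 := by
  rw [abs_mul, abs_pow, abs_of_nonneg (wR_nonneg f.1)]
  calc |t| ^ topv f.1 * wR f.1 ≤ 1 * wR f.1 :=
        mul_le_mul_of_nonneg_right (pow_le_one₀ (abs_nonneg t) ht) (wR_nonneg f.1)
    _ = wR f.1 := one_mul _

lemma summable_FR (n : ℕ) {t : ℝ} (ht : |t| ≤ 1) :
    Summable (fun f : Dn n => t ^ topv f.1 * wR f.1) := by
  rw [← summable_abs_iff]
  exact Summable.of_nonneg_of_le (fun f => abs_nonneg _) (fun f => FR_abs_le ht f)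
    (summable_wR n)

lemma PP_one_toReal (n : ℕ) : (PP n 1).toReal = ∑' f : Dn n, wR f.1 := by
  rw [← tsum_w_eq_PP_one,
    ENNReal.tsum_toReal_eq (f := fun f : Dn n => w f.1) (fun f => w_ne_top f.1 f.2.2)]
  exact tsum_congr fun f => wR_eq f.1

lemma Li2pow_abs_le (n : ℕ) {t : ℝ} (ht : |t| ≤ 1) : |Li2pow n t| ≤ (PP n 1).toReal := by
  rw [Li2pow_eq, PP_one_toReal]
  have h1 : ‖∑' f : Dn n, t ^ topv f.1 * wR f.1‖ ≤ ∑' f : Dn n, ‖t ^ topv f.1 * wR f.1‖ :=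
    norm_tsum_le_tsum_norm (by simpa only [Real.norm_eq_abs] using (summable_FR n ht).abs)
  rw [Real.norm_eq_abs] at h1
  refine h1.trans (Summable.tsum_le_tsum (fun f => ?_) ?_ (summable_wR n))
  · rw [Real.norm_eq_abs]; exact FR_abs_le ht f
  · simpa only [Real.norm_eq_abs] using (summable_FR n ht).abs

lemma part1 (θ : ℝ) {t : ℝ} (ht : |t| ≤ 1) :
    Summable (fun n : ℕ => Li2pow n t * θ ^ (2 * n)) := by
  rw [← summable_abs_iff]
  have hM : Summable (fun n : ℕ => (PP n 1).toReal * θ ^ (2 * n)) := by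
    have h1 : ∀ n : ℕ, (PP n 1).toReal * θ ^ (2 * n)
        = ((ENNReal.ofReal (θ ^ 2)) ^ n * PP n 1).toReal := by
      intro n
      rw [ENNReal.toReal_mul, ENNReal.toReal_pow, ENNReal.toReal_ofReal (sq_nonneg θ),
        mul_comm, pow_mul]
    rw [funext h1]
    exact ENNReal.summable_toReal (T_ne_top le_rfl θ)
  refine Summable.of_nonneg_of_le (fun n => abs_nonneg _) (fun n => ?_) hM
  have hθ : 0 ≤ θ ^ (2 * n) := by rw [pow_mul]; positivity
  rw [abs_mul, abs_of_nonneg hθ]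
  exact mul_le_mul_of_nonneg_right (Li2pow_abs_le n ht) hθ

lemma L2gen_eq (θ : ℝ) {t : ℝ} (ht0 : 0 ≤ t) (ht1 : t ≤ 1) :
    L2gen t θ = ∑' k : ℕ, aa θ k * t ^ k := by
  set v := ENNReal.ofReal (θ ^ 2) with hv
  set τ := ENNReal.ofReal t with hτdef
  have hτ : τ ≤ 1 := ENNReal.ofReal_le_one.mpr ht1
  have hLi : ∀ n : ℕ, Li2pow n t = (PP n τ).toReal := by
    intro n
    rw [Li2pow_eq, PP,
      ENNReal.tsum_toReal_eq (f := fun f : Dn n => τ ^ topv f.1 * w f.1)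
        (fun f => ENNReal.mul_ne_top (ENNReal.pow_ne_top ENNReal.ofReal_ne_top)
          (w_ne_top f.1 f.2.2))]
    refine tsum_congr fun f => ?_
    rw [ENNReal.toReal_mul, ENNReal.toReal_pow, ENNReal.toReal_ofReal ht0, wR_eq]
  have h1 : ∀ n : ℕ, Li2pow n t * θ ^ (2 * n) = (v ^ n * PP n τ).toReal := by
    intro n
    rw [hLi n, ENNReal.toReal_mul, ENNReal.toReal_pow, hv,
      ENNReal.toReal_ofReal (sq_nonneg θ), pow_mul]
    ring
  rw [L2gen, funext h1, ← ENNReal.tsum_toReal_eq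
      (fun n => ENNReal.mul_ne_top (ENNReal.pow_ne_top ENNReal.ofReal_ne_top) (PP_ne_top hτ n)),
    T_eq τ v, ENNReal.tsum_toReal_eq
      (fun k => ENNReal.mul_ne_top (ENNReal.pow_ne_top ENNReal.ofReal_ne_top)
        (Ahat_ne_top ENNReal.ofReal_ne_top k))]
  refine tsum_congr fun k => ?_
  rw [ENNReal.toReal_mul, ENNReal.toReal_pow, ENNReal.toReal_ofReal ht0]
  simp only [aa]
  ring

/-- the uniform coefficient bound -/
noncomputable def CC (θ : ℝ) : ℝ := max 1 (θ ^ 2 * Real.exp (2 * θ ^ 2))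

lemma CC_pos (θ : ℝ) : 0 < CC θ := lt_of_lt_of_le one_pos (le_max_left _ _)

lemma aa_le_CC (θ : ℝ) (k : ℕ) : aa θ k ≤ CC θ := aa_le_C θ k

lemma summable_pow_mul (m : ℕ) {r : ℝ} (hr : |r| < 1) :
    Summable (fun k : ℕ => (k : ℝ) ^ m * r ^ k) :=
  summable_pow_mul_geometric_of_norm_lt_one m (by rwa [Real.norm_eq_abs])

lemma summable_shifted (θ : ℝ) (m : ℕ) (hm : 1 ≤ m) {r : ℝ} (hr0 : 0 < r) (hr1 : r < 1) :
    Summable (fun k : ℕ => CC θ * ((k : ℝ) ^ m * r ^ (k - 1))) := by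
  have hbase : Summable (fun k : ℕ => r⁻¹ * ((k : ℝ) ^ m * r ^ k)) :=
    (summable_pow_mul m (by rw [abs_of_pos hr0]; exact hr1)).mul_left r⁻¹
  refine (hbase.congr fun k => ?_).mul_left (CC θ)
  cases k with
  | zero =>
    have h0 : (0 : ℝ) ^ m = 0 := zero_pow (by omega)
    simp [h0]
  | succ k =>
    have h1 : (k + 1 : ℕ) - 1 = k := rfl
    rw [h1, pow_succ]
    field_simp

lemma summable_kpow_aa (θ : ℝ) (m : ℕ) {x : ℝ} (hx : |x| < 1) :
    Summable (fun k : ℕ => (k : ℝ) ^ m * aa θ k * x ^ k) := by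
  rw [← summable_abs_iff]
  have hs : Summable (fun k : ℕ => CC θ * ((k : ℝ) ^ m * |x| ^ k)) :=
    (summable_pow_mul m (by rwa [abs_abs])).mul_left (CC θ)
  refine Summable.of_nonneg_of_le (fun k => abs_nonneg _) (fun k => ?_) hs
  have habs : |(k : ℝ) ^ m * aa θ k * x ^ k| = (k : ℝ) ^ m * aa θ k * |x| ^ k := by
    rw [abs_mul, abs_mul, abs_pow, abs_pow, Nat.abs_cast, abs_of_nonneg (aa_nonneg θ k)]
  rw [habs]
  have h2 : (k : ℝ) ^ m * aa θ k * |x| ^ k ≤ (k : ℝ) ^ m * CC θ * |x| ^ k := by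
    refine mul_le_mul_of_nonneg_right (mul_le_mul_of_nonneg_left (aa_le_CC θ k)
      (by positivity)) (by positivity)
  exact h2.trans (le_of_eq (by ring))

lemma summable_aa_pow (θ : ℝ) {x : ℝ} (hx : |x| < 1) :
    Summable (fun k : ℕ => aa θ k * x ^ k) :=
  (summable_kpow_aa θ 0 hx).congr fun k => by rw [pow_zero, one_mul]

lemma hasDeriv_g (θ : ℝ) {r : ℝ} (hr0 : 0 < r) (hr1 : r < 1) :
    ∀ y ∈ Set.Ioo (-r) r, HasDerivAt (fun z : ℝ => ∑' k : ℕ, aa θ k * z ^ k)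
      (∑' k : ℕ, aa θ k * ((k : ℝ) * y ^ (k - 1))) y := by
  intro y hy
  refine hasDerivAt_tsum_of_isPreconnected
    (u := fun k : ℕ => CC θ * ((k : ℝ) ^ 1 * r ^ (k - 1)))
    (summable_shifted θ 1 le_rfl hr0 hr1) isOpen_Ioo (convex_Ioo _ _).isPreconnected
    (fun k z hz => (hasDerivAt_pow k z).const_mul (aa θ k))
    (fun k z hz => ?_) (show (0 : ℝ) ∈ Set.Ioo (-r) r from ⟨by linarith, hr0⟩) ?_ hy
  · have hzr : |z| ≤ r := le_of_lt (abs_lt.mpr ⟨hz.1, hz.2⟩)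
    rw [Real.norm_eq_abs, abs_mul, abs_mul, abs_pow, Nat.abs_cast,
      abs_of_nonneg (aa_nonneg θ k), pow_one]
    exact mul_le_mul (aa_le_CC θ k) (mul_le_mul_of_nonneg_left
      (pow_le_pow_left₀ (abs_nonneg z) hzr _) (Nat.cast_nonneg k))
      (by positivity) (CC_pos θ).le
  · refine summable_of_ne_finset_zero (s := {0}) fun k hk => ?_
    have : k ≠ 0 := by simpa using hk
    simp [zero_pow this]

lemma hasDeriv_h (θ : ℝ) {r : ℝ} (hr0 : 0 < r) (hr1 : r < 1) :
    ∀ y ∈ Set.Ioo (-r) r, HasDerivAt (fun z : ℝ => ∑' k : ℕ, aa θ k * ((k : ℝ) * z ^ k))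
      (∑' k : ℕ, aa θ k * ((k : ℝ) * ((k : ℝ) * y ^ (k - 1)))) y := by
  intro y hy
  refine hasDerivAt_tsum_of_isPreconnected
    (u := fun k : ℕ => CC θ * ((k : ℝ) ^ 2 * r ^ (k - 1)))
    (summable_shifted θ 2 one_le_two hr0 hr1) isOpen_Ioo (convex_Ioo _ _).isPreconnected
    (fun k z hz => (((hasDerivAt_pow k z).const_mul ((k : ℝ))).const_mul (aa θ k)))
    (fun k z hz => ?_) (show (0 : ℝ) ∈ Set.Ioo (-r) r from ⟨by linarith, hr0⟩) ?_ hy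
  · have hzr : |z| ≤ r := le_of_lt (abs_lt.mpr ⟨hz.1, hz.2⟩)
    rw [Real.norm_eq_abs, abs_mul, abs_mul, abs_mul, abs_pow, Nat.abs_cast,
      abs_of_nonneg (aa_nonneg θ k)]
    have h1 : aa θ k * ((k : ℝ) * ((k : ℝ) * |z| ^ (k - 1)))
        ≤ CC θ * ((k : ℝ) * ((k : ℝ) * r ^ (k - 1))) := by
      refine mul_le_mul (aa_le_CC θ k) ?_ (by positivity) (CC_pos θ).le
      refine mul_le_mul_of_nonneg_left (mul_le_mul_of_nonneg_left
        (pow_le_pow_left₀ (abs_nonneg z) hzr _) (Nat.cast_nonneg k)) (Nat.cast_nonneg k)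
    exact h1.trans (le_of_eq (by ring))
  · refine summable_of_ne_finset_zero (s := {0}) fun k hk => ?_
    have : k ≠ 0 := by simpa using hk
    simp [zero_pow this]

end L2genAux

open L2genAux in
/-- For every real `θ`, the series `L_{(2)}(t,θ) = ∑ Li_{{2}^n}(t) θ^{2n}`
converges for all `|t| ≤ 1`, and for `0 < t < 1` satisfies
`(1-t) d/dt (t d/dt L) = θ² L`. -/
theorem L2gen_converges_and_ode (θ : ℝ) :
    (∀ t : ℝ, |t| ≤ 1 → Summable (fun n : ℕ => Li2pow n t * θ ^ (2 * n))) ∧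
    (∀ t : ℝ, 0 < t → t < 1 →
      (1 - t) * deriv (fun x : ℝ => x * deriv (fun y : ℝ => L2gen y θ) x) t =
        θ ^ 2 * L2gen t θ) := by
  constructor
  · intro t ht
    exact part1 θ ht
  · intro t ht0 ht1
    set r : ℝ := (1 + t) / 2 with hrdef
    have hr0 : 0 < r := by rw [hrdef]; linarith
    have hrt : t < r := by rw [hrdef]; linarith
    have hr1 : r < 1 := by rw [hrdef]; linarith
    have htabs : |t| < 1 := abs_lt.mpr ⟨by linarith, ht1⟩
    -- derivative of L2gen on (0, r)
    have hderivL : ∀ x ∈ Set.Ioo (0 : ℝ) r,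
        deriv (fun y : ℝ => L2gen y θ) x = ∑' k : ℕ, aa θ k * ((k : ℝ) * x ^ (k - 1)) := by
      intro x hx
      have hmem : Set.Ioo (0 : ℝ) 1 ∈ nhds x := Ioo_mem_nhds hx.1 (lt_trans hx.2 hr1)
      have hev : (fun y : ℝ => L2gen y θ) =ᶠ[nhds x] (fun z : ℝ => ∑' k : ℕ, aa θ k * z ^ k) :=
        Filter.eventuallyEq_of_mem hmem (fun y hy => L2gen_eq θ hy.1.le hy.2.le)
      rw [hev.deriv_eq]
      exact (hasDeriv_g θ hr0 hr1 x ⟨by linarith [hx.1], hx.2⟩).deriv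
    -- outer function agrees with h near t
    have houter : (fun x : ℝ => x * deriv (fun y : ℝ => L2gen y θ) x)
        =ᶠ[nhds t] (fun z : ℝ => ∑' k : ℕ, aa θ k * ((k : ℝ) * z ^ k)) := by
      refine Filter.eventuallyEq_of_mem (Ioo_mem_nhds ht0 hrt) fun x hx => ?_
      rw [hderivL x hx, ← tsum_mul_left]
      refine tsum_congr fun k => ?_
      cases k with
      | zero => simp
      | succ k =>
        have h1 : (k + 1 : ℕ) - 1 = k := rfl
        rw [h1, pow_succ]
        push_cast
        ring
    have htmem : t ∈ Set.Ioo (-r) r := ⟨by linarith, hrt⟩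
    have hD : deriv (fun x : ℝ => x * deriv (fun y : ℝ => L2gen y θ) x) t
        = ∑' k : ℕ, aa θ k * ((k : ℝ) * ((k : ℝ) * t ^ (k - 1))) := by
      rw [houter.deriv_eq]
      exact (hasDeriv_h θ hr0 hr1 t htmem).deriv
    rw [hD]
    -- now the algebra with the recurrence
    set V : ℕ → ℝ := fun k => aa θ k * ((k : ℝ) * ((k : ℝ) * t ^ (k - 1))) with hVdef
    have hVabs : ∀ k : ℕ, |V k| ≤ CC θ * ((k : ℝ) ^ 2 * r ^ (k - 1)) := by
      intro k
      have htr : |t| ≤ r := le_of_lt (abs_lt.mpr ⟨by linarith, hrt⟩)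
      rw [hVdef]
      dsimp only
      rw [abs_mul, abs_mul, abs_mul, abs_pow, Nat.abs_cast, abs_of_nonneg (aa_nonneg θ k)]
      have h1 : aa θ k * ((k : ℝ) * ((k : ℝ) * |t| ^ (k - 1)))
          ≤ CC θ * ((k : ℝ) * ((k : ℝ) * r ^ (k - 1))) := by
        refine mul_le_mul (aa_le_CC θ k) ?_ (by positivity) (CC_pos θ).le
        refine mul_le_mul_of_nonneg_left (mul_le_mul_of_nonneg_left
          (pow_le_pow_left₀ (abs_nonneg t) htr _) (Nat.cast_nonneg k)) (Nat.cast_nonneg k)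
      exact h1.trans (le_of_eq (by ring))
    have hVsum : Summable V := by
      rw [← summable_abs_iff]
      exact Summable.of_nonneg_of_le (fun k => abs_nonneg _) hVabs
        (summable_shifted θ 2 one_le_two hr0 hr1)
    have hA : Summable (fun k : ℕ => (k : ℝ) ^ 2 * aa θ k * t ^ k) :=
      summable_kpow_aa θ 2 htabs
    have hB : Summable (fun k : ℕ => θ ^ 2 * (aa θ k * t ^ k)) :=
      (summable_aa_pow θ htabs).mul_left (θ ^ 2)
    have hstep : ∀ k : ℕ, V (k + 1)
        = (k : ℝ) ^ 2 * aa θ k * t ^ k + θ ^ 2 * (aa θ k * t ^ k) := by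
      intro k
      have h1 : (k + 1 : ℕ) - 1 = k := rfl
      have h2 : V (k + 1) = ((k : ℝ) + 1) ^ 2 * aa θ (k + 1) * t ^ k := by
        rw [hVdef]; dsimp only; rw [h1]; push_cast; ring
      rw [h2, aa_rec θ k]
      ring
    have hS2 : ∑' k : ℕ, V k
        = (∑' k : ℕ, (k : ℝ) ^ 2 * aa θ k * t ^ k) + θ ^ 2 * ∑' k : ℕ, aa θ k * t ^ k := by
      rw [Summable.tsum_eq_zero_add hVsum]
      have hV0 : V 0 = 0 := by rw [hVdef]; simp
      rw [hV0, zero_add, tsum_congr hstep, Summable.tsum_add hA hB, tsum_mul_left]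
    have htS2 : t * ∑' k : ℕ, V k = ∑' k : ℕ, (k : ℝ) ^ 2 * aa θ k * t ^ k := by
      rw [← tsum_mul_left]
      refine tsum_congr fun k => ?_
      cases k with
      | zero => simp [hVdef]
      | succ k =>
        have h1 : (k + 1 : ℕ) - 1 = k := rfl
        rw [hVdef]
        dsimp only
        rw [h1, pow_succ]
        push_cast
        ring
    rw [sub_mul, one_mul, hS2]
    rw [L2gen_eq θ ht0.le ht1.le]
    nlinarith [htS2, hS2]
end

section
/- If the coefficients of c ∈ ℝ⟨⟨X⟩⟩ over X = {x_0,…,x_m} satisfy |(c,η)| ≤ K M^{|η|} for all words η, then for any bounded measurable u: [t_0,t_1] → ℝ^m with |u_i| ≤ R and (m+1)M·max(R,1)·(t_1 - t_0) < 1, the Chen–Fliess series F_c[u](t) = ∑_{η ∈ X*} (c,η) E_η[u](t,t_0) converges absolutely and uniformly on [t_0, t_1]. -/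
/-- The iterated Chen integral `E_η[u]` defined recursively by `E_∅[u] = 1` and
`E_{x_i η'}[u](t,t₀) = ∫_{t₀}^t u_i(τ) E_{η'}[u](τ,t₀) dτ`. -/
noncomputable def chenE {m : ℕ} (t₀ : ℝ) (u : Fin (m + 1) → ℝ → ℝ) :
    List (Fin (m + 1)) → ℝ → ℝ
  | [], _ => 1
  | i :: w, t => ∫ τ in t₀..t, u i τ * chenE t₀ u w τ

lemma chenE_bound {m : ℕ} (t₀ t₁ : ℝ) (hle : t₀ ≤ t₁) (R : ℝ)
    (u : Fin (m + 1) → ℝ → ℝ)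
    (hbound : ∀ i, ∀ τ ∈ Set.Icc t₀ t₁, |u i τ| ≤ R) :
    ∀ (w : List (Fin (m + 1))), ∀ t ∈ Set.Icc t₀ t₁,
      |chenE t₀ u w t| ≤ (max R 1 * (t₁ - t₀)) ^ w.length := by
  intro w
  induction w with
  | nil =>
    intro t ht
    simp [chenE]
  | cons i w ih =>
    intro t ht
    have hR1 : (0:ℝ) ≤ max R 1 := le_trans zero_le_one (le_max_right _ _)
    have hBn : (0:ℝ) ≤ (max R 1 * (t₁ - t₀)) ^ w.length :=
      pow_nonneg (mul_nonneg hR1 (by linarith [ht.1, ht.2])) _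
    have key : ‖∫ τ in t₀..t, u i τ * chenE t₀ u w τ‖ ≤
        (max R 1 * (max R 1 * (t₁ - t₀)) ^ w.length) * |t - t₀| := by
      apply intervalIntegral.norm_integral_le_of_norm_le_const
      intro τ hτ
      rw [Set.uIoc_of_le ht.1] at hτ
      have hτmem : τ ∈ Set.Icc t₀ t₁ := ⟨le_of_lt hτ.1, le_trans hτ.2 ht.2⟩
      have h1 : |u i τ| ≤ max R 1 := le_trans (hbound i τ hτmem) (le_max_left _ _)
      have h2 := ih τ hτmem
      calc ‖u i τ * chenE t₀ u w τ‖ = |u i τ| * |chenE t₀ u w τ| := abs_mul _ _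
        _ ≤ max R 1 * (max R 1 * (t₁ - t₀)) ^ w.length :=
            mul_le_mul h1 h2 (abs_nonneg _) hR1
    have habs : |t - t₀| ≤ t₁ - t₀ := by
      rw [abs_of_nonneg (by linarith [ht.1])]; linarith [ht.2]
    calc |chenE t₀ u (i :: w) t| = ‖∫ τ in t₀..t, u i τ * chenE t₀ u w τ‖ := rfl
      _ ≤ (max R 1 * (max R 1 * (t₁ - t₀)) ^ w.length) * |t - t₀| := key
      _ ≤ (max R 1 * (max R 1 * (t₁ - t₀)) ^ w.length) * (t₁ - t₀) := by
          apply mul_le_mul_of_nonneg_left habs (mul_nonneg hR1 hBn)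
      _ = (max R 1 * (t₁ - t₀)) ^ (i :: w).length := by
          rw [List.length_cons, pow_succ]; ring

lemma summable_list_geom {m : ℕ} (K q : ℝ) (hq : 0 ≤ q)
    (hsmall : ((m : ℝ) + 1) * q < 1) :
    Summable (fun η : List (Fin (m + 1)) => K * q ^ η.length) := by
  have := (List.equivSigmaTuple (α := Fin (m + 1))).symm.summable_iff
    (f := fun η : List (Fin (m + 1)) => K * q ^ η.length)
  rw [← this]
  have hKq : ∀ n : ℕ, 0 ≤ K ∨ True := fun _ => Or.inr trivial
  rcases le_or_gt K 0 with hK | hK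
  · -- handle sign uniformly: use comparison with |K| version instead
    have h1 : Summable (fun p : Σ n, Fin n → Fin (m + 1) =>
        |K| * q ^ p.1) := by
      apply (summable_sigma_of_nonneg ?_).2
      · constructor
        · intro n; exact (hasSum_fintype _).summable
        · simp only [tsum_fintype, Finset.sum_const, Finset.card_univ,
            Fintype.card_fun, Fintype.card_fin, nsmul_eq_mul]
          have : Summable (fun n : ℕ => |K| * (((m:ℝ)+1) * q) ^ n) :=
            (summable_geometric_of_lt_one (by positivity) hsmall).mul_left _
          apply this.congr
          intro n
          rw [mul_pow]
          push_cast
          ring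
      · intro p; positivity
    apply Summable.of_norm
    apply h1.of_nonneg_of_le (fun p => norm_nonneg _)
    intro p
    have hlen : ((List.equivSigmaTuple (α := Fin (m+1))).symm p).length = p.1 := by
      rcases p with ⟨n, f⟩; simp [List.equivSigmaTuple]
    simp only [Function.comp_apply, hlen]
    exact le_of_eq (by rw [Real.norm_eq_abs, abs_mul, abs_of_nonneg (pow_nonneg hq p.1)])
  · have h1 : Summable (fun p : Σ n, Fin n → Fin (m + 1) =>
        K * q ^ p.1) := by
      apply (summable_sigma_of_nonneg ?_).2
      · constructor
        · intro n; exact (hasSum_fintype _).summable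
        · simp only [tsum_fintype, Finset.sum_const, Finset.card_univ,
            Fintype.card_fun, Fintype.card_fin, nsmul_eq_mul]
          have : Summable (fun n : ℕ => K * (((m:ℝ)+1) * q) ^ n) :=
            (summable_geometric_of_lt_one (by positivity) hsmall).mul_left _
          apply this.congr
          intro n
          rw [mul_pow]
          push_cast
          ring
      · intro p; positivity
    exact h1.congr (fun p => by simp [List.equivSigmaTuple])

/-- if `|(c,η)| ≤ K M^{|η|}` for all words `η` over `X = {x₀,…,x_m}`, then
for any bounded measurable `u` with `|u_i| ≤ R` on `[t₀,t₁]` and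
`(m+1)·M·max(R,1)·(t₁-t₀) < 1`, the Chen–Fliess series
`F_c[u](t) = ∑_η (c,η) E_η[u](t,t₀)` converges absolutely and uniformly on `[t₀,t₁]`. -/
theorem chen_fliess_converges (m : ℕ) (t₀ t₁ : ℝ) (hle : t₀ ≤ t₁)
    (c : List (Fin (m + 1)) → ℝ) (K M R : ℝ) (hK : 0 < K) (hM : 0 < M)
    (hc : ∀ η : List (Fin (m + 1)), |c η| ≤ K * M ^ η.length)
    (u : Fin (m + 1) → ℝ → ℝ) (hu0 : u 0 = fun _ => 1)
    (humeas : ∀ i, Measurable (u i))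
    (hbound : ∀ i, ∀ τ ∈ Set.Icc t₀ t₁, |u i τ| ≤ R)
    (hsmall : ((m : ℝ) + 1) * M * max R 1 * (t₁ - t₀) < 1) :
    (∀ t ∈ Set.Icc t₀ t₁,
      Summable (fun η : List (Fin (m + 1)) => |c η * chenE t₀ u η t|)) ∧
    TendstoUniformlyOn
      (fun (S : Finset (List (Fin (m + 1)))) (t : ℝ) =>
        ∑ η ∈ S, c η * chenE t₀ u η t)
      (fun t => ∑' η : List (Fin (m + 1)), c η * chenE t₀ u η t)
      Filter.atTop (Set.Icc t₀ t₁) := by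
  set q : ℝ := M * (max R 1 * (t₁ - t₀)) with hq_def
  have hR1 : (0:ℝ) ≤ max R 1 := le_trans zero_le_one (le_max_right _ _)
  have hq : 0 ≤ q := by
    apply mul_nonneg hM.le (mul_nonneg hR1 (by linarith))
  have hsmall' : ((m : ℝ) + 1) * q < 1 := by
    calc ((m : ℝ) + 1) * q = ((m : ℝ) + 1) * M * max R 1 * (t₁ - t₀) := by
          rw [hq_def]; ring
      _ < 1 := hsmall
  have hgeom := summable_list_geom (m := m) K q hq hsmall'
  have hbnd : ∀ η : List (Fin (m + 1)), ∀ t ∈ Set.Icc t₀ t₁,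
      ‖c η * chenE t₀ u η t‖ ≤ K * q ^ η.length := by
    intro η t ht
    rw [Real.norm_eq_abs, abs_mul]
    have h1 := hc η
    have h2 := chenE_bound t₀ t₁ hle R u hbound η t ht
    calc |c η| * |chenE t₀ u η t|
        ≤ (K * M ^ η.length) * ((max R 1 * (t₁ - t₀)) ^ η.length) := by
          apply mul_le_mul h1 h2 (abs_nonneg _)
          positivity
      _ = K * q ^ η.length := by simp only [hq_def, mul_pow]; ring
  constructor
  · intro t ht
    apply hgeom.of_nonneg_of_le (fun η => abs_nonneg _)
    intro η
    exact hbnd η t ht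
  · exact tendstoUniformlyOn_tsum hgeom (fun η t ht => hbnd η t ht)
end
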